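/- arXiv:2309.06459 — 8 statements merged into one kernel-verified Lean document; each statement's English description precedes it below -/
import Mathlib

section
/- In a matched pair study under Fisher's sharp null hypothesis, let T = Σ_{i=1}^I (Z_{i1} q_{i1} + Z_{i2} q_{i2}) where, for each pair i, (Z_{i1}, Z_{i2}) with Z_{i1} + Z_{i2} = 1 are mutually independent across pairs and P(Z_{i1} = 1) = exp(γ_i* u_{i1}*)/(exp(γ_i* u_{i1}*) + exp(γ_i* u_{i2}*)) for some γ_i* = log Γ_i* ≥ 0 and u_{ij}* ∈ [0,1]. Suppose Γ_i* ≤ Γ_i for all i, where Γ_i ∈ [1,∞]. Let T̄(Γ) = Σ_{i=1}^I T̄_i where T̄_i are independent, with T̄_i equal to max{q_{i1}, q_{i2}} with probability Γ_i/(1+Γ_i) and min{q_{i1}, q_{i2}} with probability 1/(1+Γ_i). Then P(T ≥ c) ≤ P(T̄(Γ) ≥ c) for all real c. -/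
/-!
Encode pair `i` by the Boolean "the treated unit is the one with the larger `q`". Then
`T = ∑ i, (if Bᵢ then max else min)` with independent `Bᵢ`, and `T̄(Γ)` has the same form with
the `ξᵢ`. Under the model `P(Bᵢ) ≤ Γ*ᵢ/(1+Γ*ᵢ) ≤ Γᵢ/(1+Γᵢ) = P(ξᵢ)`, because
`exp(γu)/(exp(γu)+exp(γu')) ≤ e^γ/(1+e^γ)` for `u, u' ∈ [0,1]`. Finally, a sum of independent
variables taking the values `loᵢ ≤ hiᵢ` is stochastically increasing in each `P(= hiᵢ)`:
conditioning on one coordinate writes `P(∑ ≥ c)` as `p A + (1 - p) B` with `B ≤ A`, and induction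
over the pairs concludes.
-/
open scoped ENNReal
open MeasureTheory ProbabilityTheory

lemma ENNReal.mul_add_one_sub_mul_le {p p' A A' B B' : ℝ≥0∞} (hp' : p' ≤ 1) (hp : p ≤ p')
    (hA : A ≤ A') (hB : B ≤ B') (hBA : B' ≤ A') :
    p * A + (1 - p) * B ≤ p' * A' + (1 - p') * B' :=
  calc p * A + (1 - p) * B ≤ p * A' + (1 - p) * B' := by gcongr
    _ = p * A' + (p' - p) * B' + (1 - p') * B' := by
        rw [add_assoc, ← add_mul, add_comm (p' - p), tsub_add_tsub_cancel hp' hp]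
    _ ≤ p * A' + (p' - p) * A' + (1 - p') * B' := by gcongr
    _ = p' * A' + (1 - p') * B' := by rw [← add_mul, add_tsub_cancel_of_le hp]

section TwoPointSum

variable {Ω Ω' ι : Type*} [MeasurableSpace Ω] [MeasurableSpace Ω']
  {μ : Measure Ω} {μ' : Measure Ω'} (lo hi : ι → ℝ)

lemma measurable_sum_ite {B : ι → Ω → Bool} (hBm : ∀ i, Measurable (B i)) (s : Finset ι) :
    Measurable fun ω ↦ ∑ i ∈ s, if B i ω then hi i else lo i :=
  Finset.measurable_sum _ fun i _ ↦
    (measurable_of_countable fun b : Bool ↦ if b then hi i else lo i).comp (hBm i)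

lemma indepFun_sum_ite_of_notMem {B : ι → Ω → Bool} (hB : iIndepFun B μ)
    (hBm : ∀ i, Measurable (B i)) {s : Finset ι} {a : ι} (ha : a ∉ s) :
    IndepFun (fun ω ↦ ∑ i ∈ s, if B i ω then hi i else lo i) (B a) μ := by
  have hφ : Measurable fun b : s → Bool ↦ ∑ i, if b i then hi i else lo i :=
    Finset.measurable_sum _ fun i _ ↦
      (measurable_of_countable fun b : Bool ↦ if b then hi i else lo i).comp
        (measurable_pi_apply i)
  have hψ : Measurable fun b : ({a} : Finset ι) → Bool ↦ b ⟨a, Finset.mem_singleton_self a⟩ :=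
    measurable_pi_apply _
  convert (hB.indepFun_finset s {a} (Finset.disjoint_singleton_right.2 ha) hBm).comp hφ hψ
    using 1
  · exact funext fun ω ↦ (Finset.sum_coe_sort s _).symm
  · rfl

variable [IsProbabilityMeasure μ] [IsProbabilityMeasure μ']

lemma measure_le_sum_ite_insert [DecidableEq ι] {B : ι → Ω → Bool} (hB : iIndepFun B μ)
    (hBm : ∀ i, Measurable (B i)) {s : Finset ι} {a : ι} (ha : a ∉ s) (c : ℝ) :
    μ {ω | c ≤ ∑ i ∈ insert a s, if B i ω then hi i else lo i} =
      μ {ω | B a ω} * μ {ω | c - hi a ≤ ∑ i ∈ s, if B i ω then hi i else lo i} +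
        (1 - μ {ω | B a ω}) * μ {ω | c - lo a ≤ ∑ i ∈ s, if B i ω then hi i else lo i} := by
  set S := fun ω ↦ ∑ i ∈ s, if B i ω then hi i else lo i
  have hS := indepFun_sum_ite_of_notMem lo hi hB hBm ha
  have hsplit : {ω | c ≤ ∑ i ∈ insert a s, if B i ω then hi i else lo i} =
      (S ⁻¹' Set.Ici (c - hi a) ∩ B a ⁻¹' {true}) ∪
        (S ⁻¹' Set.Ici (c - lo a) ∩ B a ⁻¹' {true}ᶜ) := by
    ext ω
    by_cases h : B a ω <;> simp [S, Finset.sum_insert ha, h, add_comm]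
  have hBa : MeasurableSet (B a ⁻¹' {true}) := hBm a (measurableSet_singleton _)
  rw [hsplit, measure_union (Set.disjoint_left.2 fun _ h₁ h₂ ↦ h₂.2 h₁.2)
      ((measurable_sum_ite lo hi hBm s measurableSet_Ici).inter
        (hBm a (measurableSet_singleton _).compl)),
    hS.measure_inter_preimage_eq_mul _ _ measurableSet_Ici (measurableSet_singleton _),
    hS.measure_inter_preimage_eq_mul _ _ measurableSet_Ici (measurableSet_singleton _).compl,
    Set.preimage_compl, prob_compl_eq_one_sub hBa, mul_comm, mul_comm (μ (S ⁻¹' _))]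
  rfl

lemma measure_le_sum_ite_mono (hlohi : ∀ i, lo i ≤ hi i) {B : ι → Ω → Bool} {C : ι → Ω' → Bool}
    (hB : iIndepFun B μ) (hBm : ∀ i, Measurable (B i))
    (hC : iIndepFun C μ') (hCm : ∀ i, Measurable (C i))
    (hBC : ∀ i, μ {ω | B i ω} ≤ μ' {ω | C i ω}) (s : Finset ι) (c : ℝ) :
    μ {ω | c ≤ ∑ i ∈ s, if B i ω then hi i else lo i} ≤
      μ' {ω | c ≤ ∑ i ∈ s, if C i ω then hi i else lo i} := by
  classical
  induction s using Finset.induction generalizing c with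
  | empty => by_cases hc : c ≤ 0 <;> simp [hc]
  | insert a s ha ih =>
    rw [measure_le_sum_ite_insert lo hi hB hBm ha, measure_le_sum_ite_insert lo hi hC hCm ha]
    exact ENNReal.mul_add_one_sub_mul_le prob_le_one (hBC a) (ih _) (ih _)
      (measure_mono fun ω h ↦ (sub_le_sub_left (hlohi a) c).trans h)

end TwoPointSum

open Real in
lemma exp_div_exp_add_exp_le {Γ a b : ℝ} (hΓ : 1 ≤ Γ) (ha : a ≤ 1) (hb : 0 ≤ b) :
    exp (log Γ * a) / (exp (log Γ * a) + exp (log Γ * b)) ≤ Γ / (1 + Γ) := by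
  have hγ : 0 ≤ log Γ := log_nonneg hΓ
  have key : exp (log Γ * a) ≤ Γ * exp (log Γ * b) := by
    rw [← exp_log (by linarith : 0 < Γ), ← exp_add, exp_log (by linarith)]
    gcongr
    nlinarith
  rw [div_le_div_iff₀ (by positivity) (by linarith)]
  nlinarith

lemma ENNReal.ofReal_div_one_add {x : ℝ} (hx : 0 ≤ x) :
    ENNReal.ofReal (x / (1 + x)) = 1 - (1 + ENNReal.ofReal x)⁻¹ := by
  have h : x / (1 + x) = 1 - (1 + x)⁻¹ := by field_simp; ring
  rw [h, ENNReal.ofReal_sub _ (by positivity), ENNReal.ofReal_one,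
    ENNReal.ofReal_inv_of_pos (by positivity), ENNReal.ofReal_add zero_le_one hx,
    ENNReal.ofReal_one]

lemma ENNReal.one_sub_ofReal_div_add {x y : ℝ} (hx : 0 ≤ x) (hy : 0 < y) :
    1 - ENNReal.ofReal (x / (x + y)) = ENNReal.ofReal (y / (y + x)) := by
  rw [← ENNReal.ofReal_one, ← ENNReal.ofReal_sub _ (by positivity)]
  congr 1
  field_simp
  ring

lemma mul_add_one_sub_mul_eq_ite {z x y : ℝ} (hz : z = 0 ∨ z = 1) :
    z * x + (1 - z) * y = if z = (if y ≤ x then 1 else 0) then max x y else min x y := by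
  rcases hz with rfl | rfl <;> split_ifs <;> grind

open Real in
lemma ofReal_exp_div_exp_add_exp_le {Γs a b : ℝ} {Γ : ℝ≥0∞} (hΓs : 1 ≤ Γs)
    (hΓ : ENNReal.ofReal Γs ≤ Γ) (ha : a ≤ 1) (hb : 0 ≤ b) :
    ENNReal.ofReal (exp (log Γs * a) / (exp (log Γs * a) + exp (log Γs * b))) ≤
      1 - (1 + Γ)⁻¹ :=
  calc _ ≤ ENNReal.ofReal (Γs / (1 + Γs)) :=
        ENNReal.ofReal_le_ofReal (exp_div_exp_add_exp_le hΓs ha hb)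
    _ = 1 - (1 + ENNReal.ofReal Γs)⁻¹ := ENNReal.ofReal_div_one_add (by linarith)
    _ ≤ 1 - (1 + Γ)⁻¹ := by gcongr

theorem stmt7_general
    {Ω Ω' : Type*} [MeasurableSpace Ω] [MeasurableSpace Ω']
    (μ : Measure Ω) (μ' : Measure Ω')
    [IsProbabilityMeasure μ] [IsProbabilityMeasure μ']
    (I : ℕ) (q : Fin I → Fin 2 → ℝ)
    (Γstar : Fin I → ℝ) (hΓstar : ∀ i, 1 ≤ Γstar i)
    (u : Fin I → Fin 2 → ℝ) (hu : ∀ i j, u i j ∈ Set.Icc (0:ℝ) 1)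
    (Γ : Fin I → ℝ≥0∞)
    (hΓle : ∀ i, ENNReal.ofReal (Γstar i) ≤ Γ i)
    -- the true assignment indicators Z_{i1} (with Z_{i2} = 1 - Z_{i1})
    (Z : Fin I → Ω → ℝ)
    (hZ01 : ∀ i ω, Z i ω = 0 ∨ Z i ω = 1)
    (hZmeas : ∀ i, Measurable (Z i))
    (hZind : iIndepFun Z μ)
    (hZp : ∀ i, μ {ω | Z i ω = 1}
      = ENNReal.ofReal (Real.exp (Real.log (Γstar i) * u i 0) /
          (Real.exp (Real.log (Γstar i) * u i 0) + Real.exp (Real.log (Γstar i) * u i 1))))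
    -- Bernoulli indicators defining the bounding variable T̄(Γ)
    (ξ : Fin I → Ω' → Bool)
    (hξmeas : ∀ i, Measurable (ξ i))
    (hξind : iIndepFun ξ μ')
    (hξp : ∀ i, μ' {ω | ξ i ω = true} = 1 - (1 + Γ i)⁻¹) :
    ∀ c : ℝ,
      μ {ω | c ≤ ∑ i, (Z i ω * q i 0 + (1 - Z i ω) * q i 1)}
        ≤ μ' {ω | c ≤ ∑ i, (if ξ i ω then max (q i 0) (q i 1) else min (q i 0) (q i 1))} := by
  intro c
  -- `sel i (Z i ω)`: the treated unit of pair `i` is the one with the larger `q`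
  let sel : Fin I → ℝ → Bool := fun i z ↦ decide (z = if q i 1 ≤ q i 0 then 1 else 0)
  have hsel : ∀ i, Measurable (sel i) := fun i ↦
    measurable_to_bool <| by
      simpa only [sel, Set.preimage, Set.mem_singleton_iff, decide_eq_true_eq]
        using measurableSet_eq
  have hBξ : ∀ i, μ {ω | sel i (Z i ω)} ≤ μ' {ω | ξ i ω} := by
    intro i
    rw [hξp i]
    by_cases hq : q i 1 ≤ q i 0
    · simpa [sel, hq, hZp i] using
        ofReal_exp_div_exp_add_exp_le (hΓstar i) (hΓle i) (hu i 0).2 (hu i 1).1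
    · have hcompl : {ω | sel i (Z i ω)} = {ω | Z i ω = 1}ᶜ := by
        ext ω
        rcases hZ01 i ω with h | h <;> simp [sel, hq, h]
      rw [hcompl, prob_compl_eq_one_sub (measurableSet_eq_fun (hZmeas i) measurable_const),
        hZp i, ENNReal.one_sub_ofReal_div_add (by positivity) (by positivity)]
      exact ofReal_exp_div_exp_add_exp_le (hΓstar i) (hΓle i) (hu i 1).2 (hu i 0).1
  simp_rw [fun i ω ↦ mul_add_one_sub_mul_eq_ite (x := q i 0) (y := q i 1) (hZ01 i ω)]
  simpa only [sel, Function.comp_apply, decide_eq_true_eq] using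
    measure_le_sum_ite_mono (fun i ↦ min (q i 0) (q i 1)) (fun i ↦ max (q i 0) (q i 1))
      (fun _ ↦ min_le_max) (hZind.comp sel hsel) (fun i ↦ (hsel i).comp (hZmeas i))
      hξind hξmeas hBξ Finset.univ c

/-- Rosenbaum-type stochastic bound for the matched-pair test statistic under
pair-specific bounds `Γ i ∈ [1,∞]` on the hidden biases. -/
theorem stmt7
    {Ω Ω' : Type*} [MeasurableSpace Ω] [MeasurableSpace Ω']
    (μ : Measure Ω) (μ' : Measure Ω')
    [IsProbabilityMeasure μ] [IsProbabilityMeasure μ']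
    (I : ℕ) (q : Fin I → Fin 2 → ℝ)
    (Γstar : Fin I → ℝ) (hΓstar : ∀ i, 1 ≤ Γstar i)
    (u : Fin I → Fin 2 → ℝ) (hu : ∀ i j, u i j ∈ Set.Icc (0:ℝ) 1)
    (Γ : Fin I → ℝ≥0∞) (hΓ1 : ∀ i, 1 ≤ Γ i)
    (hΓle : ∀ i, ENNReal.ofReal (Γstar i) ≤ Γ i)
    -- the true assignment indicators Z_{i1} (with Z_{i2} = 1 - Z_{i1})
    (Z : Fin I → Ω → ℝ)
    (hZ01 : ∀ i ω, Z i ω = 0 ∨ Z i ω = 1)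
    (hZmeas : ∀ i, Measurable (Z i))
    (hZind : iIndepFun Z μ)
    (hZp : ∀ i, μ {ω | Z i ω = 1}
      = ENNReal.ofReal (Real.exp (Real.log (Γstar i) * u i 0) /
          (Real.exp (Real.log (Γstar i) * u i 0) + Real.exp (Real.log (Γstar i) * u i 1))))
    -- Bernoulli indicators defining the bounding variable T̄(Γ)
    (ξ : Fin I → Ω' → Bool)
    (hξmeas : ∀ i, Measurable (ξ i))
    (hξind : iIndepFun ξ μ')
    (hξp : ∀ i, μ' {ω | ξ i ω = true} = 1 - (1 + Γ i)⁻¹) :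
    ∀ c : ℝ,
      μ {ω | c ≤ ∑ i, (Z i ω * q i 0 + (1 - Z i ω) * q i 1)}
        ≤ μ' {ω | c ≤ ∑ i, (if ξ i ω then max (q i 0) (q i 1) else min (q i 0) (q i 1))} :=
  stmt7_general μ μ' I q Γstar hΓstar u hu Γ hΓle Z hZ01 hZmeas hZind hZp ξ hξmeas hξind hξp
end

section
/- In a matched pair study under Fisher's sharp null, for 1 ≤ k ≤ I and Γ_0 ∈ [1,∞], let I_k be the set of indices of the k matched pairs with the smallest values of |q_{i1} - q_{i2}|. Define T̄(Γ_0; k) = Σ_{i ∈ I_k} T̄_i + Σ_{i ∉ I_k} max{q_{i1}, q_{i2}}, where T̄_i are independent, equal to max{q_{i1}, q_{i2}} with probability Γ_0/(1+Γ_0) and min{q_{i1}, q_{i2}} with probability 1/(1+Γ_0). Let T be the test statistic under any treatment assignment mechanism whose k-th smallest hidden bias satisfies Γ*_{(k)} ≤ Γ_0. Then P(T ≥ c) ≤ P(T̄(Γ_0; k) ≥ c) for all real c. -/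
/-!
Fix a set `K` of `k` pairs whose hidden bias is at most `Γ0` and a permutation `σ` that maps `S`
into `K` and fixes `S ∩ K`. Let `M i` say that the treated unit of pair `i` has the larger
response, so that `T = ∑ i, (if M i then max else min)`. Since `S` collects the pairs with the
smallest spread `max - min`, pointwise
`T ≤ ∑ i ∈ S, (if M (σ i) then max else min) + ∑ i ∉ S, max`.
The right-hand side is increasing in the independent indicators `M (σ i)`, `i ∈ S`, each true with
probability at most `Γ0 / (1 + Γ0)`; replacing them by Bernoulli variables with exactly that
parameter can only increase the probability of an up-set, which gives the bound by `T̄(Γ0; k)`.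
-/

open scoped ENNReal
open MeasureTheory ProbabilityTheory Finset Real

theorem ENNReal.mul_add_mul_le_mul_add_mul {p q p' q' a b : ℝ≥0∞} (h : p + q = 1)
    (h' : p' + q' = 1) (hp : p ≤ p') (hab : a ≤ b) : p * b + q * a ≤ p' * b + q' * a := by
  have hq : q = (p' - p) + q' := by
    have hp_ne : p ≠ ⊤ := ne_top_of_le_ne_top one_ne_top (h ▸ le_self_add)
    refine (ENNReal.add_right_inj hp_ne).1 ?_
    rw [h, ← add_assoc, add_tsub_cancel_of_le hp, h']
  calc p * b + q * a = p * b + (p' - p) * a + q' * a := by rw [hq, add_mul, add_assoc]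
    _ ≤ p * b + (p' - p) * b + q' * a := by gcongr
    _ = p' * b + q' * a := by rw [← add_mul, add_tsub_cancel_of_le hp]

theorem sum_indicator_prod_le_of_isUpperSet {n : ℕ} {w w' : Fin n → Bool → ℝ≥0∞}
    (hw : ∀ i, w i true + w i false = 1) (hw' : ∀ i, w' i true + w' i false = 1)
    (hle : ∀ i, w i true ≤ w' i true) {s : Set (Fin n → Bool)} (hs : IsUpperSet s) :
    ∑ f, s.indicator (fun f ↦ ∏ i, w i (f i)) f ≤ ∑ f, s.indicator (fun f ↦ ∏ i, w' i (f i)) f := by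
  induction n with
  | zero => simp
  | succ n ih =>
    let s' (b : Bool) : Set (Fin n → Bool) := {g | Fin.cons b g ∈ s}
    have split (v : Fin (n + 1) → Bool → ℝ≥0∞) : ∑ f, s.indicator (fun f ↦ ∏ i, v i (f i)) f
        = v 0 true * ∑ g, (s' true).indicator (fun g ↦ ∏ i, v i.succ (g i)) g
          + v 0 false * ∑ g, (s' false).indicator (fun g ↦ ∏ i, v i.succ (g i)) g := by
      classical
      rw [← (Fin.consEquiv _).sum_comp, Fintype.sum_prod_type, Fintype.sum_bool, mul_sum, mul_sum]
      simp only [Set.indicator_apply, Fin.consEquiv, Equiv.coe_fn_mk, Fin.prod_univ_succ,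
        Fin.cons_zero, Fin.cons_succ, mul_ite, mul_zero, s', Set.mem_ofPred_eq]
    have hs' (b : Bool) : IsUpperSet (s' b) :=
      hs.preimage fun _ _ h ↦ Fin.cons_le_cons.2 ⟨le_rfl, h⟩
    have hmono : ∑ g, (s' false).indicator (fun g ↦ ∏ i, w' i.succ (g i)) g
        ≤ ∑ g, (s' true).indicator (fun g ↦ ∏ i, w' i.succ (g i)) g :=
      sum_le_sum fun g _ ↦ Set.indicator_le_indicator_of_subset
        (fun g (hg : g ∈ s' false) ↦ show g ∈ s' true from
          hs (Fin.cons_le_cons.2 ⟨Bool.false_le _, le_rfl⟩) hg) (fun _ ↦ zero_le) g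
    rw [split w, split w']
    calc _ ≤ w 0 true * ∑ g, (s' true).indicator (fun g ↦ ∏ i, w' i.succ (g i)) g
          + w 0 false * ∑ g, (s' false).indicator (fun g ↦ ∏ i, w' i.succ (g i)) g := by
          gcongr w 0 true * ?_ + w 0 false * ?_ <;>
            exact ih (fun i ↦ hw _) (fun i ↦ hw' _) (fun i ↦ hle _) (hs' _)
      _ ≤ _ := ENNReal.mul_add_mul_le_mul_add_mul (hw 0) (hw' 0) (hle 0) hmono

theorem ProbabilityTheory.iIndepFun.measure_preimage_eq_sum_indicator_prod {Ω ι β : Type*}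
    [MeasurableSpace Ω] {μ : Measure Ω} [Fintype ι] [DecidableEq ι] [Fintype β]
    [MeasurableSpace β] [MeasurableSingletonClass β]
    {X : ι → Ω → β} (hX : ∀ i, Measurable (X i)) (hXi : iIndepFun X μ) (E : Set (ι → β)) :
    μ ((fun ω i ↦ X i ω) ⁻¹' E) = ∑ f, E.indicator (fun f ↦ ∏ i, μ (X i ⁻¹' {f i})) f := by
  classical
  have hfiber (f : ι → β) : (fun ω i ↦ X i ω) ⁻¹' {f} = ⋂ i, X i ⁻¹' {f i} := by
    ext ω; simp [funext_iff]
  calc μ ((fun ω i ↦ X i ω) ⁻¹' E)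
      = μ ((fun ω i ↦ X i ω) ⁻¹' ↑(univ.filter (· ∈ E))) := by simp
    _ = ∑ f ∈ univ.filter (· ∈ E), μ ((fun ω i ↦ X i ω) ⁻¹' {f}) :=
      (sum_measure_preimage_singleton _ fun f _ ↦
        measurable_pi_lambda _ hX (measurableSet_singleton f)).symm
    _ = _ := by
      rw [sum_filter]
      refine sum_congr rfl fun f _ ↦ ?_
      rw [Set.indicator_apply, hfiber,
        hXi.meas_iInter fun i ↦ ⟨{f i}, measurableSet_singleton _, rfl⟩]

theorem measure_preimage_true_add_measure_preimage_false {Ω : Type*} [MeasurableSpace Ω]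
    {μ : Measure Ω} [IsProbabilityMeasure μ] {X : Ω → Bool} (hX : Measurable X) :
    μ (X ⁻¹' {true}) + μ (X ⁻¹' {false}) = 1 := by
  rw [← Fintype.sum_bool fun b ↦ μ (X ⁻¹' {b}),
    sum_measure_preimage_singleton _ fun b _ ↦ hX (measurableSet_singleton b), coe_univ,
    Set.preimage_univ, measure_univ]

theorem ProbabilityTheory.iIndepFun.measure_preimage_le_of_isUpperSet {Ω Ω' ι : Type*}
    [MeasurableSpace Ω] [MeasurableSpace Ω'] {μ : Measure Ω} {μ' : Measure Ω'}
    [IsProbabilityMeasure μ] [IsProbabilityMeasure μ'] [Fintype ι] {X : ι → Ω → Bool}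
    {Y : ι → Ω' → Bool}
    (hX : ∀ i, Measurable (X i)) (hY : ∀ i, Measurable (Y i)) (hXi : iIndepFun X μ)
    (hYi : iIndepFun Y μ') (hle : ∀ i, μ (X i ⁻¹' {true}) ≤ μ' (Y i ⁻¹' {true}))
    {E : Set (ι → Bool)} (hE : IsUpperSet E) :
    μ ((fun ω i ↦ X i ω) ⁻¹' E) ≤ μ' ((fun ω i ↦ Y i ω) ⁻¹' E) := by
  let e := Fintype.equivFin ι
  let E' : Set (Fin (Fintype.card ι) → Bool) := (· ∘ e) ⁻¹' E
  have hXE : (fun ω i ↦ X i ω) ⁻¹' E = (fun ω j ↦ X (e.symm j) ω) ⁻¹' E' := by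
    ext; simp [E', Function.comp_def]
  have hYE : (fun ω i ↦ Y i ω) ⁻¹' E = (fun ω j ↦ Y (e.symm j) ω) ⁻¹' E' := by
    ext; simp [E', Function.comp_def]
  rw [hXE, hYE, (hXi.precomp e.symm.injective).measure_preimage_eq_sum_indicator_prod
    (fun _ ↦ hX _), (hYi.precomp e.symm.injective).measure_preimage_eq_sum_indicator_prod
    (fun _ ↦ hY _)]
  exact sum_indicator_prod_le_of_isUpperSet (w := fun j b ↦ μ (X (e.symm j) ⁻¹' {b}))
    (w' := fun j b ↦ μ' (Y (e.symm j) ⁻¹' {b}))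
    (fun _ ↦ measure_preimage_true_add_measure_preimage_false (hX _))
    (fun _ ↦ measure_preimage_true_add_measure_preimage_false (hY _)) (fun _ ↦ hle _)
    (hE.preimage fun _ _ h i ↦ h (e i))

theorem Finset.exists_perm_mapsTo_of_card_eq {α : Type*} [Fintype α] [DecidableEq α]
    {S K : Finset α} (h : #S = #K) :
    ∃ σ : Equiv.Perm α, ∀ i ∈ S, σ i ∈ K ∧ (σ i ∈ S → σ i = i) := by
  obtain ⟨g, hg⟩ := Set.MapsTo.exists_equiv_extend_of_card_eq (t := K)
    (s := {i : S | (i : α) ∈ K}) (f := Subtype.val) (by simpa using h) (fun _ hi ↦ hi)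
    Subtype.val_injective.injOn
  let σ : Equiv.Perm α := Equiv.extendSubtype g
  have hσ (i : α) (hi : i ∈ S) : σ i = g ⟨i, hi⟩ := Equiv.extendSubtype_apply_of_mem g i hi
  refine ⟨σ, fun i hi ↦ ⟨hσ i hi ▸ (g _).2, fun hσi ↦ σ.injective ?_⟩⟩
  rw [hσ _ hσi, hg _ (show σ i ∈ K from hσ i hi ▸ (g _).2)]

theorem sum_ite_le_sum_ite_comp_perm {ι : Type*} [Fintype ι] [DecidableEq ι] {S : Finset ι}
    {σ : Equiv.Perm ι} {lo hi : ι → ℝ} (hlo : ∀ i, lo i ≤ hi i)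
    (hS : ∀ i ∈ S, ∀ j ∉ S, hi i - lo i ≤ hi j - lo j) (hσ : ∀ i ∈ S, σ i ∈ S → σ i = i)
    (y : ι → Bool) :
    ∑ i, (if y i then hi i else lo i)
      ≤ ∑ i ∈ S, (if y (σ i) then hi i else lo i) + ∑ i ∈ Sᶜ, hi i := by
  have hσS (i) (hiS : i ∈ S) : (if y (σ i) then hi (σ i) else lo (σ i))
      ≤ (if y (σ i) then hi i else lo i) + (hi (σ i) - hi i) := by
    have : hi i - lo i ≤ hi (σ i) - lo (σ i) := by
      by_cases h : σ i ∈ S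
      · rw [hσ i hiS h]
      · exact hS i hiS (σ i) h
    split_ifs <;> linarith
  have hσSc (i) : (if y (σ i) then hi (σ i) else lo (σ i)) ≤ hi (σ i) := by
    split_ifs <;> linarith [hlo (σ i)]
  calc ∑ i, (if y i then hi i else lo i)
        = ∑ i ∈ S, (if y (σ i) then hi (σ i) else lo (σ i))
          + ∑ i ∈ Sᶜ, (if y (σ i) then hi (σ i) else lo (σ i)) := by
        rw [sum_add_sum_compl, Equiv.sum_comp σ fun i ↦ if y i then hi i else lo i]
    _ ≤ ∑ i ∈ S, ((if y (σ i) then hi i else lo i) + (hi (σ i) - hi i)) + ∑ i ∈ Sᶜ, hi (σ i) :=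
      add_le_add (sum_le_sum hσS) (sum_le_sum fun i _ ↦ hσSc i)
    _ = ∑ i ∈ S, (if y (σ i) then hi i else lo i) + ∑ i ∈ Sᶜ, hi i := by
      have := Equiv.sum_comp σ hi
      rw [← sum_add_sum_compl S (fun i ↦ hi (σ i)), ← sum_add_sum_compl S hi] at this
      rw [sum_add_distrib, sum_sub_distrib]
      linarith

theorem isUpperSet_setOf_le_sum_ite_add {ι : Type*} [Fintype ι] {lo hi : ι → ℝ}
    (hlo : ∀ i, lo i ≤ hi i) (c C : ℝ) :
    IsUpperSet {y : ι → Bool | c ≤ ∑ i, (if y i then hi i else lo i) + C} := by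
  refine fun y y' hyy' (hy : c ≤ _) ↦ hy.trans (add_le_add (sum_le_sum fun i _ ↦ ?_) le_rfl)
  have := hyy' i
  revert this
  cases y i <;> cases y' i <;> simp [hlo i]

/-- Probability that the first unit of a pair is treated in the sensitivity model with hidden
bias `Γ` and unobserved covariates `a`, `b` of the two units. -/
noncomputable def sensitivityProb (Γ a b : ℝ) : ℝ :=
  exp (log Γ * a) / (exp (log Γ * a) + exp (log Γ * b))

theorem sensitivityProb_nonneg (Γ a b : ℝ) : 0 ≤ sensitivityProb Γ a b := by
  unfold sensitivityProb; positivity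

theorem one_sub_sensitivityProb (Γ a b : ℝ) :
    1 - sensitivityProb Γ a b = sensitivityProb Γ b a := by
  unfold sensitivityProb
  field_simp
  ring

theorem sensitivityProb_le {Γ a b : ℝ} (hΓ : 1 ≤ Γ) (hab : a - b ≤ 1) :
    sensitivityProb Γ a b ≤ Γ / (1 + Γ) := by
  have hΓpos : 0 < Γ := by linarith
  have hexp : exp (log Γ * a) ≤ Γ * exp (log Γ * b) := by
    calc exp (log Γ * a) ≤ exp (log Γ + log Γ * b) := by
          gcongr; nlinarith [log_nonneg hΓ]
      _ = Γ * exp (log Γ * b) := by rw [exp_add, exp_log hΓpos]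
  unfold sensitivityProb
  rw [div_le_div_iff₀ (by positivity) (by positivity)]
  nlinarith [exp_pos (log Γ * a)]

theorem ENNReal.ofReal_div_one_add_le {Γ : ℝ} {Γ0 : ℝ≥0∞} (hΓ : 0 ≤ Γ)
    (h : ENNReal.ofReal Γ ≤ Γ0) : ENNReal.ofReal (Γ / (1 + Γ)) ≤ 1 - (1 + Γ0)⁻¹ := by
  have h1 : Γ / (1 + Γ) = 1 - (1 + Γ)⁻¹ := by field_simp; ring
  rw [h1, ENNReal.ofReal_sub _ (by positivity), ENNReal.ofReal_one,
    ENNReal.ofReal_inv_of_pos (by positivity), ENNReal.ofReal_add zero_le_one hΓ,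
    ENNReal.ofReal_one]
  gcongr

/-- Whether, in a pair with responses `q 0`, `q 1` and `z = Z_{i1}`, the treated unit is the one
with the larger response. -/
noncomputable def treatedIsMax (q : Fin 2 → ℝ) (z : ℝ) : Bool :=
  decide (z = if q 1 ≤ q 0 then 1 else 0)

theorem measurable_treatedIsMax (q : Fin 2 → ℝ) : Measurable (treatedIsMax q) :=
  measurable_to_bool (by simp [treatedIsMax, Set.preimage])

theorem mul_add_one_sub_mul_eq_ite_treatedIsMax {z : ℝ} (hz : z = 0 ∨ z = 1) (q : Fin 2 → ℝ) :
    z * q 0 + (1 - z) * q 1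
      = if treatedIsMax q z then max (q 0) (q 1) else min (q 0) (q 1) := by
  unfold treatedIsMax
  rcases hz with rfl | rfl <;> split_ifs <;> simp_all [max_def, min_def] <;> grind

theorem measure_eq_le_one_sub_inv_of_sensitivityProb {Ω : Type*} [MeasurableSpace Ω]
    {μ : Measure Ω} [IsProbabilityMeasure μ] {Z : Ω → ℝ} (hZ01 : ∀ ω, Z ω = 0 ∨ Z ω = 1)
    (hZ : Measurable Z) {Γ a b : ℝ}
    (hZp : μ {ω | Z ω = 1} = ENNReal.ofReal (sensitivityProb Γ a b))
    (hΓ : 1 ≤ Γ) (hab : |a - b| ≤ 1) {Γ0 : ℝ≥0∞} (hΓ0 : ENNReal.ofReal Γ ≤ Γ0) {t : ℝ}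
    (ht : t = 0 ∨ t = 1) : μ {ω | Z ω = t} ≤ 1 - (1 + Γ0)⁻¹ := by
  obtain ⟨hab, hba⟩ := abs_sub_le_iff.1 hab
  refine le_trans ?_ (ENNReal.ofReal_div_one_add_le (by linarith) hΓ0)
  rcases ht with rfl | rfl
  · have hcompl : {ω | Z ω = 0} = {ω | Z ω = 1}ᶜ := by
      ext ω; rcases hZ01 ω with h | h <;> simp [h]
    rw [hcompl, prob_compl_eq_one_sub (measurableSet_eq_fun hZ measurable_const), hZp,
      ← ENNReal.ofReal_one, ← ENNReal.ofReal_sub _ (sensitivityProb_nonneg _ _ _),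
      one_sub_sensitivityProb]
    exact ENNReal.ofReal_le_ofReal (sensitivityProb_le hΓ hba)
  · rw [hZp]
    exact ENNReal.ofReal_le_ofReal (sensitivityProb_le hΓ hab)

theorem measure_treatedIsMax_le {Ω : Type*} [MeasurableSpace Ω] {μ : Measure Ω}
    [IsProbabilityMeasure μ] {Z : Ω → ℝ} (hZ01 : ∀ ω, Z ω = 0 ∨ Z ω = 1) (hZ : Measurable Z)
    {Γ a b : ℝ} (hZp : μ {ω | Z ω = 1} = ENNReal.ofReal (sensitivityProb Γ a b))
    (hΓ : 1 ≤ Γ) (hab : |a - b| ≤ 1) {Γ0 : ℝ≥0∞} (hΓ0 : ENNReal.ofReal Γ ≤ Γ0)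
    (q : Fin 2 → ℝ) : μ ((treatedIsMax q ∘ Z) ⁻¹' {true}) ≤ 1 - (1 + Γ0)⁻¹ := by
  rw [show (treatedIsMax q ∘ Z) ⁻¹' {true} = {ω | Z ω = if q 1 ≤ q 0 then 1 else 0} by
    ext; simp [treatedIsMax]]
  exact measure_eq_le_one_sub_inv_of_sensitivityProb hZ01 hZ hZp hΓ hab hΓ0
    (by split_ifs <;> simp)

theorem stmt8_general
    {Ω Ω' : Type*} [MeasurableSpace Ω] [MeasurableSpace Ω']
    (μ : Measure Ω) (μ' : Measure Ω')
    [IsProbabilityMeasure μ] [IsProbabilityMeasure μ']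
    (I : ℕ) (q : Fin I → Fin 2 → ℝ)
    (k : ℕ)
    (Γ0 : ℝ≥0∞)
    (Γstar : Fin I → ℝ) (hΓstar : ∀ i, 1 ≤ Γstar i)
    (u : Fin I → Fin 2 → ℝ) (hu : ∀ i j, u i j ∈ Set.Icc (0:ℝ) 1)
    -- the k-th smallest hidden bias is bounded by Γ0
    (hquant : ∃ K : Finset (Fin I), K.card = k ∧ ∀ i ∈ K, ENNReal.ofReal (Γstar i) ≤ Γ0)
    -- the true assignment indicators Z_{i1} (with Z_{i2} = 1 - Z_{i1})
    (Z : Fin I → Ω → ℝ)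
    (hZ01 : ∀ i ω, Z i ω = 0 ∨ Z i ω = 1)
    (hZmeas : ∀ i, Measurable (Z i))
    (hZind : iIndepFun Z μ)
    (hZp : ∀ i, μ {ω | Z i ω = 1}
      = ENNReal.ofReal (Real.exp (Real.log (Γstar i) * u i 0) /
          (Real.exp (Real.log (Γstar i) * u i 0) + Real.exp (Real.log (Γstar i) * u i 1))))
    -- the indices of the k pairs with the smallest |q_{i1} - q_{i2}|
    (S : Finset (Fin I)) (hScard : S.card = k)
    (hSsmall : ∀ i ∈ S, ∀ j ∉ S, |q i 0 - q i 1| ≤ |q j 0 - q j 1|)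
    -- Bernoulli indicators defining the bounding variable T̄(Γ0; k)
    (ξ : Fin I → Ω' → Bool)
    (hξmeas : ∀ i, Measurable (ξ i))
    (hξind : iIndepFun ξ μ')
    (hξp : ∀ i ∈ S, μ' {ω | ξ i ω = true} = 1 - (1 + Γ0)⁻¹) :
    ∀ c : ℝ,
      μ {ω | c ≤ ∑ i, (Z i ω * q i 0 + (1 - Z i ω) * q i 1)}
        ≤ μ' {ω | c ≤ (∑ i ∈ S, (if ξ i ω then max (q i 0) (q i 1) else min (q i 0) (q i 1)))
              + ∑ i ∈ Sᶜ, max (q i 0) (q i 1)} := by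
  intro c
  obtain ⟨K, hKcard, hKΓ⟩ := hquant
  obtain ⟨σ, hσ⟩ := Finset.exists_perm_mapsTo_of_card_eq (hScard.trans hKcard.symm)
  let hi (i : Fin I) : ℝ := max (q i 0) (q i 1)
  let lo (i : Fin I) : ℝ := min (q i 0) (q i 1)
  let E : Set (S → Bool) := {y | c ≤ ∑ i : S, (if y i then hi i else lo i) + ∑ i ∈ Sᶜ, hi i}
  calc μ {ω | c ≤ ∑ i, (Z i ω * q i 0 + (1 - Z i ω) * q i 1)}
      ≤ μ ((fun ω (i : S) ↦ treatedIsMax (q (σ i)) (Z (σ i) ω)) ⁻¹' E) := by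
        refine measure_mono fun ω (hω : c ≤ _) ↦ show c ≤ _ from ?_
        rw [sum_coe_sort S fun i ↦ if treatedIsMax (q (σ i)) (Z (σ i) ω) then hi i else lo i]
        refine hω.trans (le_of_eq_of_le (sum_congr rfl fun i _ ↦
          mul_add_one_sub_mul_eq_ite_treatedIsMax (hZ01 i ω) (q i)) ?_)
        exact sum_ite_le_sum_ite_comp_perm (fun i ↦ min_le_max)
          (by simpa only [hi, lo, max_sub_min_eq_abs'] using hSsmall)
          (fun i hiS ↦ (hσ i hiS).2) (fun i ↦ treatedIsMax (q i) (Z i ω))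
    _ ≤ μ' ((fun ω (i : S) ↦ ξ i ω) ⁻¹' E) :=
        iIndepFun.measure_preimage_le_of_isUpperSet
          (X := fun (i : S) ↦ treatedIsMax (q (σ i)) ∘ Z (σ i))
          (fun _ ↦ (measurable_treatedIsMax _).comp (hZmeas _)) (fun _ ↦ hξmeas _)
          ((hZind.comp _ fun i ↦ measurable_treatedIsMax (q i)).precomp
            (σ.injective.comp Subtype.val_injective))
          (hξind.precomp Subtype.val_injective)
          (fun i ↦ (measure_treatedIsMax_le (hZ01 _) (hZmeas _) (hZp _) (hΓstar _)
            (abs_sub_le_of_nonneg_of_le (hu _ 0).1 (hu _ 0).2 (hu _ 1).1 (hu _ 1).2)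
            (hKΓ _ (hσ i i.2).1) _).trans (hξp i i.2).ge)
          (isUpperSet_setOf_le_sum_ite_add (fun _ ↦ min_le_max) _ _)
    _ = _ := by
        congr 1
        ext ω
        exact iff_of_eq (congrArg (c ≤ · + _)
          (sum_coe_sort S fun i ↦ if ξ i ω then hi i else lo i))

/-- Stochastic bound for the matched-pair test statistic when only the k-th
smallest hidden bias is bounded by `Γ0`: the worst case assigns infinite bias
to the `I - k` pairs with the largest `|q_{i1} - q_{i2}|`. -/
theorem stmt8
    {Ω Ω' : Type*} [MeasurableSpace Ω] [MeasurableSpace Ω']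
    (μ : Measure Ω) (μ' : Measure Ω')
    [IsProbabilityMeasure μ] [IsProbabilityMeasure μ']
    (I : ℕ) (q : Fin I → Fin 2 → ℝ)
    (k : ℕ) (hk1 : 1 ≤ k) (hkI : k ≤ I)
    (Γ0 : ℝ≥0∞) (hΓ0 : 1 ≤ Γ0)
    (Γstar : Fin I → ℝ) (hΓstar : ∀ i, 1 ≤ Γstar i)
    (u : Fin I → Fin 2 → ℝ) (hu : ∀ i j, u i j ∈ Set.Icc (0:ℝ) 1)
    -- the k-th smallest hidden bias is bounded by Γ0
    (hquant : ∃ K : Finset (Fin I), K.card = k ∧ ∀ i ∈ K, ENNReal.ofReal (Γstar i) ≤ Γ0)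
    -- the true assignment indicators Z_{i1} (with Z_{i2} = 1 - Z_{i1})
    (Z : Fin I → Ω → ℝ)
    (hZ01 : ∀ i ω, Z i ω = 0 ∨ Z i ω = 1)
    (hZmeas : ∀ i, Measurable (Z i))
    (hZind : iIndepFun Z μ)
    (hZp : ∀ i, μ {ω | Z i ω = 1}
      = ENNReal.ofReal (Real.exp (Real.log (Γstar i) * u i 0) /
          (Real.exp (Real.log (Γstar i) * u i 0) + Real.exp (Real.log (Γstar i) * u i 1))))
    -- the indices of the k pairs with the smallest |q_{i1} - q_{i2}|
    (S : Finset (Fin I)) (hScard : S.card = k)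
    (hSsmall : ∀ i ∈ S, ∀ j ∉ S, |q i 0 - q i 1| ≤ |q j 0 - q j 1|)
    -- Bernoulli indicators defining the bounding variable T̄(Γ0; k)
    (ξ : Fin I → Ω' → Bool)
    (hξmeas : ∀ i, Measurable (ξ i))
    (hξind : iIndepFun ξ μ')
    (hξp : ∀ i ∈ S, μ' {ω | ξ i ω = true} = 1 - (1 + Γ0)⁻¹) :
    ∀ c : ℝ,
      μ {ω | c ≤ ∑ i, (Z i ω * q i 0 + (1 - Z i ω) * q i 1)}
        ≤ μ' {ω | c ≤ (∑ i ∈ S, (if ξ i ω then max (q i 0) (q i 1) else min (q i 0) (q i 1)))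
              + ∑ i ∈ Sᶜ, max (q i 0) (q i 1)} :=
  stmt8_general μ μ' I q k Γ0 Γstar hΓstar u hu hquant Z hZ01 hZmeas hZind hZp S hScard hSsmall ξ
    hξmeas hξind hξp
end

section
/- In a matched pair study, assume Fisher's sharp null H_0 holds and the true k-th smallest hidden bias satisfies Γ*_{(k)} ≤ Γ_0. Then the p-value p̄_{Γ_0;k} = Ḡ_{Γ_0;k}(T) satisfies P(p̄_{Γ_0;k} ≤ α) ≤ α for every α ∈ (0,1), where Ḡ_{Γ_0;k}(c) = P(T̄(Γ_0;k) ≥ c). -/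
/-!
Encode each treatment indicator as a Boolean. By independence, `P(T ≥ t)` and `P(T̄ ≥ t)` are
survival functions of sums of independent two-point variables. Subtract from every pair its larger
possible value: a pair in `K` then contributes `0` with probability at most `Γ₀/(1+Γ₀)` and
`-|q i 0 - q i 1|` otherwise, and every other pair contributes at most `0`. Relabel the pairs by a
permutation mapping `S` into `K` without decreasing `|q i 0 - q i 1|` on `S` (possible because `S`
holds the smallest such differences). Each coordinate of `T` is then stochastically below the
matching coordinate of `T̄`, and stochastic order is preserved by sums of independent variables,
so `P(T ≥ c) ≤ Ḡ(c)` for all `c`. As `T` takes finitely many values, `{Ḡ(T) ≤ α}` lies in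
`{T ≥ c}` for the smallest value `c` of `T` on it, an event of probability at most `Ḡ(c) ≤ α`.
-/

open scoped ENNReal
open MeasureTheory ProbabilityTheory Finset

noncomputable section

def survival {α : Type*} [Fintype α] (w : α → ℝ≥0∞) (v : α → ℝ) (t : ℝ) : ℝ≥0∞ :=
  ∑ a with t ≤ v a, w a

def survivalSum {ι β : Type*} [Fintype ι] [DecidableEq ι] [Fintype β]
    (w : ι → β → ℝ≥0∞) (v : ι → β → ℝ) (t : ℝ) : ℝ≥0∞ :=
  survival (fun b : ι → β => ∏ i, w i (b i)) (fun b => ∑ i, v i (b i)) t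

end

section Survival

variable {α β : Type*} [Fintype α] [Fintype β]

lemma survival_comp_equiv (e : α ≃ β) (w : β → ℝ≥0∞) (v : β → ℝ) (t : ℝ) :
    survival (w ∘ e) (v ∘ e) t = survival w v t := by
  simp only [survival, sum_filter]
  exact e.sum_comp fun b => if t ≤ v b then w b else 0

lemma survival_add_const (w : α → ℝ≥0∞) (v : α → ℝ) (c t : ℝ) :
    survival w (fun a => v a + c) t = survival w v (t - c) := by
  simp only [survival, sub_le_iff_le_add]

lemma survival_le_of_le_const {w w' : α → ℝ≥0∞} {v v' : α → ℝ} {c : ℝ}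
    (hv : ∀ a, v a ≤ c) (hv' : ∀ a, c ≤ v' a) (hw : ∑ a, w a ≤ ∑ a, w' a) (t : ℝ) :
    survival w v t ≤ survival w' v' t := by
  by_cases ht : t ≤ c
  · calc survival w v t ≤ ∑ a, w a := sum_le_univ_sum_of_nonneg fun _ => zero_le
      _ ≤ ∑ a, w' a := hw
      _ = survival w' v' t := by
        rw [survival, filter_true_of_mem fun a _ => ht.trans (hv' a)]
  · rw [survival, filter_false_of_mem fun a _ h => ht (h.trans (hv a)), sum_empty]
    exact zero_le

lemma survival_bool_le {w w' : Bool → ℝ≥0∞} {v v' : Bool → ℝ}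
    (hwt : w true ≤ w' true) (hwf : w false ≤ w' true)
    (hw : w true + w false ≤ w' true + w' false)
    (hmax : max (v true) (v false) ≤ v' true) (hmin : min (v true) (v false) ≤ v' false)
    (t : ℝ) : survival w v t ≤ survival w' v' t := by
  simp only [survival, sum_filter, Fintype.sum_bool]
  have hM_t (h : t ≤ v true) : t ≤ v' true := h.trans ((le_max_left _ _).trans hmax)
  have hM_f (h : t ≤ v false) : t ≤ v' true := h.trans ((le_max_right _ _).trans hmax)
  by_cases h1 : t ≤ v true <;> by_cases h2 : t ≤ v false
  · rw [if_pos h1, if_pos h2, if_pos (hM_t h1), if_pos ((le_min h1 h2).trans hmin)]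
    exact hw
  · rw [if_pos h1, if_neg h2, if_pos (hM_t h1), add_zero]
    exact le_add_right hwt
  · rw [if_neg h1, if_pos h2, if_pos (hM_f h2), zero_add]
    exact le_add_right hwf
  · rw [if_neg h1, if_neg h2, add_zero]
    exact zero_le

end Survival

section SurvivalSum

variable {ι κ β : Type*} [Fintype ι] [DecidableEq ι] [Fintype κ] [DecidableEq κ] [Fintype β]

lemma survivalSum_comp_equiv (e : κ ≃ ι) (w : ι → β → ℝ≥0∞) (v : ι → β → ℝ) (t : ℝ) :
    survivalSum (fun k => w (e k)) (fun k => v (e k)) t = survivalSum w v t := by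
  rw [survivalSum, ← survival_comp_equiv (e.arrowCongr (Equiv.refl β)).symm]
  congr 1 <;> funext b
  · exact e.prod_comp fun i => w i (b i)
  · exact e.sum_comp fun i => v i (b i)

lemma survivalSum_add_const (w : ι → β → ℝ≥0∞) (v : ι → β → ℝ) (c : ι → ℝ) (t : ℝ) :
    survivalSum w (fun i b => v i b + c i) t = survivalSum w v (t - ∑ i, c i) := by
  simp only [survivalSum, sum_add_distrib, survival_add_const]

lemma survivalSum_fin_succ {n : ℕ} (w : Fin (n + 1) → β → ℝ≥0∞) (v : Fin (n + 1) → β → ℝ)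
    (t : ℝ) : survivalSum w v t = ∑ a, ∑ r : Fin n → β,
      if t ≤ v 0 a + ∑ i, v i.succ (r i) then w 0 a * ∏ i, w i.succ (r i) else 0 := by
  rw [survivalSum, survival, sum_filter, ← (Fin.consEquiv fun _ => β).sum_comp,
    Fintype.sum_prod_type]
  simp [Fin.sum_univ_succ, Fin.prod_univ_succ, Fin.consEquiv]

lemma survivalSum_fin_le {n : ℕ} {w w' : Fin n → β → ℝ≥0∞} {v v' : Fin n → β → ℝ}
    (h : ∀ i t, survival (w i) (v i) t ≤ survival (w' i) (v' i) t) (t : ℝ) :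
    survivalSum w v t ≤ survivalSum w' v' t := by
  induction n generalizing t with
  | zero => simp [survivalSum]
  | succ n ih =>
    calc survivalSum w v t
        = ∑ a, w 0 a *
            survivalSum (fun i : Fin n => w i.succ) (fun i => v i.succ) (t - v 0 a) := by
          rw [survivalSum_fin_succ]
          simp only [survivalSum, survival, sum_filter, mul_sum, mul_ite, mul_zero,
            sub_le_iff_le_add']
      _ ≤ ∑ a, w 0 a *
            survivalSum (fun i : Fin n => w' i.succ) (fun i => v' i.succ) (t - v 0 a) := by
          gcongr
          exact ih (fun i => h i.succ) _
      _ = ∑ r : Fin n → β, (∏ i : Fin n, w' i.succ (r i)) *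
            survival (w 0) (v 0) (t - ∑ i : Fin n, v' i.succ (r i)) := by
          simp only [survivalSum, survival, sum_filter, mul_sum, mul_ite, mul_zero,
            sub_le_iff_le_add', add_comm (v 0 _)]
          rw [sum_comm]
          simp only [mul_comm]
      _ ≤ ∑ r : Fin n → β, (∏ i : Fin n, w' i.succ (r i)) *
            survival (w' 0) (v' 0) (t - ∑ i : Fin n, v' i.succ (r i)) := by
          gcongr
          exact h 0 _
      _ = survivalSum w' v' t := by
          rw [survivalSum_fin_succ, sum_comm]
          simp only [survival, sum_filter, mul_sum, mul_ite, sub_le_iff_le_add',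
            add_comm (v' 0 _), mul_comm, zero_mul]

lemma survivalSum_le {w w' : ι → β → ℝ≥0∞} {v v' : ι → β → ℝ}
    (h : ∀ i t, survival (w i) (v i) t ≤ survival (w' i) (v' i) t) (t : ℝ) :
    survivalSum w v t ≤ survivalSum w' v' t := by
  let e := (Fintype.equivFin ι).symm
  rw [← survivalSum_comp_equiv e w, ← survivalSum_comp_equiv e w']
  exact survivalSum_fin_le (fun i => h (e i)) t

end SurvivalSum

section Probability

variable {Ω ι β : Type*} [MeasurableSpace Ω] {μ : Measure Ω}
  [Fintype ι] [DecidableEq ι] [Fintype β] [MeasurableSpace β] [MeasurableSingletonClass β]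

lemma sum_measure_fiber_eq_one [IsProbabilityMeasure μ] {f : Ω → β} (hf : Measurable f) :
    ∑ b, μ {ω | f ω = b} = 1 := by
  rw [← measure_univ (μ := μ), ← Set.preimage_univ (f := f), ← coe_univ,
    ← sum_measure_preimage_singleton _ fun b _ => hf (measurableSet_singleton b)]
  rfl

lemma measure_le_sum_eq_survivalSum {f : ι → Ω → β} (hf : ∀ i, Measurable (f i))
    (hind : iIndepFun f μ) (v : ι → β → ℝ) (t : ℝ) :
    μ {ω | t ≤ ∑ i, v i (f i ω)} = survivalSum (fun i b => μ {ω | f i ω = b}) v t := by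
  let g : Ω → ι → β := fun ω i => f i ω
  have hg : Measurable g := measurable_pi_lambda g hf
  have hfiber (b : ι → β) : g ⁻¹' {b} = ⋂ i ∈ (univ : Finset ι), f i ⁻¹' {b i} := by
    ext ω; simp [g, funext_iff]
  have hset : {ω | t ≤ ∑ i, v i (f i ω)} =
      g ⁻¹' ↑(univ.filter fun b : ι → β => t ≤ ∑ i, v i (b i)) := by
    ext ω; simp [g]
  rw [hset, ← sum_measure_preimage_singleton _ fun b _ => hg (measurableSet_singleton b)]
  refine sum_congr rfl fun b _ => ?_
  rw [hfiber, hind.measure_inter_preimage_eq_mul _ fun i _ => measurableSet_singleton (b i)]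
  rfl

lemma measure_pvalue_le {α : Type*} [LinearOrder α] {T : Ω → α} (hT : (Set.range T).Finite)
    {G : α → ℝ≥0∞} (hG : ∀ c, μ {ω | c ≤ T ω} ≤ G c) (a : ℝ≥0∞) :
    μ {ω | G (T ω) ≤ a} ≤ a := by
  rcases Set.eq_empty_or_nonempty {ω | G (T ω) ≤ a} with hE | hE
  · simp [hE]
  obtain ⟨_, ⟨ω₀, hω₀, rfl⟩, hmin⟩ :=
    Set.exists_min_image _ id (hT.subset (Set.image_subset_range T _)) (hE.image T)
  calc μ {ω | G (T ω) ≤ a} ≤ μ {ω | T ω₀ ≤ T ω} :=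
        measure_mono fun ω hω => hmin _ (Set.mem_image_of_mem T hω)
    _ ≤ G (T ω₀) := hG _
    _ ≤ a := hω₀

end Probability

lemma exists_perm_forall_mem_le {ι α : Type*} [Fintype ι] [DecidableEq ι] [Preorder α]
    {d : ι → α} {K S : Finset ι} (hcard : K.card = S.card)
    (hS : ∀ i ∈ S, ∀ j ∉ S, d i ≤ d j) :
    ∃ σ : Equiv.Perm ι, ∀ i ∈ S, σ i ∈ K ∧ d i ≤ d (σ i) := by
  obtain ⟨g, hg⟩ := Set.MapsTo.exists_equiv_extend_of_card_eq (α := S) (t := K)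
    (s := {i | (i : ι) ∈ K}) (by simp [hcard]) (fun i hi => hi) Subtype.val_injective.injOn
  refine ⟨g.extendSubtype, fun i hi => ?_⟩
  rw [Equiv.extendSubtype_apply_of_mem g i hi]
  refine ⟨(g ⟨i, hi⟩).2, ?_⟩
  by_cases hiK : i ∈ K
  · rw [hg ⟨i, hi⟩ hiK]
  refine hS i hi _ fun hgS => hiK ?_
  -- `g` fixes `S ∩ K`, so `g i ∈ S` would force `g (g i) = g i`, i.e. `g i = i`.
  have hfix : g ⟨g ⟨i, hi⟩, hgS⟩ = g ⟨i, hi⟩ := Subtype.ext (hg _ (g ⟨i, hi⟩).2)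
  have hgi : (g ⟨i, hi⟩ : ι) = i := congrArg Subtype.val (g.injective hfix)
  exact hgi ▸ (g ⟨i, hi⟩).2

section WorstCase

variable {ι : Type*} [Fintype ι] [DecidableEq ι]

def worstCaseValue (S : Finset ι) (v : ι → Bool → ℝ) (i : ι) (b : Bool) : ℝ :=
  if i ∈ S then (if b then max (v i true) (v i false) else min (v i true) (v i false))
  else max (v i true) (v i false)

lemma sum_worstCaseValue (S : Finset ι) (v : ι → Bool → ℝ) (b : ι → Bool) :
    ∑ i, worstCaseValue S v i (b i) =
      (∑ i ∈ S, if b i then max (v i true) (v i false) else min (v i true) (v i false))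
        + ∑ i ∈ Sᶜ, max (v i true) (v i false) := by
  rw [← sum_add_sum_compl S]
  congr 1 <;> refine sum_congr rfl fun i hi => ?_ <;> simp_all [worstCaseValue]

lemma survivalSum_le_worstCase {v : ι → Bool → ℝ} {w w' : ι → Bool → ℝ≥0∞} {K S : Finset ι}
    (hcard : K.card = S.card)
    (hsmall : ∀ i ∈ S, ∀ j ∉ S, |v i true - v i false| ≤ |v j true - v j false|)
    (hw : ∀ i, ∑ b, w i b = 1) (hw' : ∀ i, ∑ b, w' i b = 1) {c : ℝ≥0∞}
    (hK : ∀ i ∈ K, w i true ∈ Set.Icc c (1 - c)) (hS : ∀ i ∈ S, 1 - c ≤ w' i true) (t : ℝ) :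
    survivalSum w v t ≤ survivalSum w' (worstCaseValue S v) t := by
  obtain ⟨σ, hσ⟩ := exists_perm_forall_mem_le hcard hsmall
  have hKfalse (j : ι) (hj : j ∈ K) : w j false ≤ 1 - c := by
    have hj1 : w j false + w j true = 1 := by rw [add_comm, ← Fintype.sum_bool, hw]
    rw [ENNReal.eq_sub_of_add_eq (ne_top_of_le_ne_top ENNReal.one_ne_top (hj1 ▸ le_add_self)) hj1]
    exact tsub_le_tsub_left (hK j hj).1 1
  set M : ι → ℝ := fun i => max (v i true) (v i false)
  have hM : ∑ i, M (σ i) = ∑ i, M i := Equiv.sum_comp σ M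
  have hcoord (i : ι) (s : ℝ) :
      survival (w (σ i)) (fun b => v (σ i) b - M (σ i)) s ≤
        survival (w' i) (fun b => worstCaseValue S v i b - M i) s := by
    by_cases hiS : i ∈ S
    · obtain ⟨hσK, hd⟩ := hσ i hiS
      refine survival_bool_le ((hK _ hσK).2.trans (hS i hiS)) ((hKfalse _ hσK).trans (hS i hiS))
        (by rw [← Fintype.sum_bool, ← Fintype.sum_bool, hw, hw']) ?_ ?_ s
      · simp [worstCaseValue, hiS, M, max_sub_sub_right]
      · simp only [worstCaseValue, hiS, Bool.false_eq_true, ↓reduceIte, min_sub_sub_right]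
        linarith [max_sub_min_eq_abs' (v i true) (v i false),
          max_sub_min_eq_abs' (v (σ i) true) (v (σ i) false)]
    · refine survival_le_of_le_const (c := 0) (fun b => ?_) (fun b => ?_)
        (by rw [hw, hw']) s
      · cases b <;> simp [M]
      · simp [worstCaseValue, hiS, M]
  calc survivalSum w v t
      = survivalSum (fun i => w (σ i)) (fun i b => v (σ i) b - M (σ i) + M (σ i)) t := by
        simp only [sub_add_cancel]
        exact (survivalSum_comp_equiv σ w v t).symm
    _ = survivalSum (fun i => w (σ i)) (fun i b => v (σ i) b - M (σ i)) (t - ∑ i, M i) := by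
        rw [survivalSum_add_const, hM]
    _ ≤ survivalSum w' (fun i b => worstCaseValue S v i b - M i) (t - ∑ i, M i) :=
        survivalSum_le hcoord _
    _ = survivalSum w' (worstCaseValue S v) t := by
        rw [← survivalSum_add_const]
        simp only [sub_add_cancel]

lemma measure_le_sum_le_measure_worstCase {Ω Ω' : Type*} [MeasurableSpace Ω]
    [MeasurableSpace Ω'] {μ : Measure Ω} {μ' : Measure Ω'} [IsProbabilityMeasure μ]
    [IsProbabilityMeasure μ'] {f : ι → Ω → Bool} {ξ : ι → Ω' → Bool}
    (hf : ∀ i, Measurable (f i)) (hfind : iIndepFun f μ)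
    (hξ : ∀ i, Measurable (ξ i)) (hξind : iIndepFun ξ μ')
    {v : ι → Bool → ℝ} {K S : Finset ι} (hcard : K.card = S.card)
    (hsmall : ∀ i ∈ S, ∀ j ∉ S, |v i true - v i false| ≤ |v j true - v j false|) {c : ℝ≥0∞}
    (hK : ∀ i ∈ K, μ {ω | f i ω = true} ∈ Set.Icc c (1 - c))
    (hS : ∀ i ∈ S, 1 - c ≤ μ' {ω | ξ i ω = true}) (t : ℝ) :
    μ {ω | t ≤ ∑ i, v i (f i ω)} ≤ μ' {ω | t ≤ ∑ i, worstCaseValue S v i (ξ i ω)} := by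
  rw [measure_le_sum_eq_survivalSum hf hfind, measure_le_sum_eq_survivalSum hξ hξind]
  exact survivalSum_le_worstCase hcard hsmall (fun i => sum_measure_fiber_eq_one (hf i))
    (fun i => sum_measure_fiber_eq_one (hξ i)) hK hS t

end WorstCase

open Real in
lemma inv_one_add_le_exp_div {Γ u₀ u₁ : ℝ} (hΓ : 1 ≤ Γ) (hu₀ : 0 ≤ u₀) (hu₁ : u₁ ≤ 1) :
    (1 + Γ)⁻¹ ≤ exp (log Γ * u₀) / (exp (log Γ * u₀) + exp (log Γ * u₁)) := by
  have hγ : 0 ≤ log Γ := log_nonneg hΓ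
  have hodds : exp (log Γ * u₁) ≤ Γ * exp (log Γ * u₀) :=
    calc exp (log Γ * u₁) ≤ exp (log Γ + log Γ * u₀) := exp_le_exp.2 (by nlinarith)
      _ = Γ * exp (log Γ * u₀) := by rw [exp_add, exp_log (by linarith)]
  rw [inv_eq_one_div, div_le_div_iff₀ (by positivity) (by positivity)]
  linarith

open Real in
lemma ofReal_exp_div_mem_Icc {Γ₀ : ℝ≥0∞} {Γ u₀ u₁ : ℝ} (hΓ : 1 ≤ Γ)
    (hΓ₀ : ENNReal.ofReal Γ ≤ Γ₀) (hu₀ : u₀ ∈ Set.Icc (0 : ℝ) 1) (hu₁ : u₁ ∈ Set.Icc (0 : ℝ) 1) :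
    ENNReal.ofReal (exp (log Γ * u₀) / (exp (log Γ * u₀) + exp (log Γ * u₁))) ∈
      Set.Icc (1 + Γ₀)⁻¹ (1 - (1 + Γ₀)⁻¹) := by
  have hc : (1 + Γ₀)⁻¹ ≤ ENNReal.ofReal (1 + Γ)⁻¹ := by
    rw [ENNReal.ofReal_inv_of_pos (by linarith), ENNReal.ofReal_add zero_le_one (by linarith),
      ENNReal.ofReal_one]
    gcongr
  have hcompl : exp (log Γ * u₀) / (exp (log Γ * u₀) + exp (log Γ * u₁)) =
      1 - exp (log Γ * u₁) / (exp (log Γ * u₁) + exp (log Γ * u₀)) := by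
    field_simp
    ring
  refine ⟨hc.trans (ENNReal.ofReal_le_ofReal (inv_one_add_le_exp_div hΓ hu₀.1 hu₁.2)), ?_⟩
  rw [hcompl, ENNReal.ofReal_sub _ (by positivity), ENNReal.ofReal_one]
  exact tsub_le_tsub_left (hc.trans (ENNReal.ofReal_le_ofReal
    (inv_one_add_le_exp_div hΓ hu₁.1 hu₀.2))) 1

theorem stmt10_general
    {Ω Ω' : Type*} [MeasurableSpace Ω] [MeasurableSpace Ω']
    (μ : Measure Ω) (μ' : Measure Ω')
    [IsProbabilityMeasure μ] [IsProbabilityMeasure μ']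
    (I : ℕ) (q : Fin I → Fin 2 → ℝ)
    (k : ℕ)
    (Γ0 : ℝ≥0∞)
    (Γstar : Fin I → ℝ) (hΓstar : ∀ i, 1 ≤ Γstar i)
    (u : Fin I → Fin 2 → ℝ) (hu : ∀ i j, u i j ∈ Set.Icc (0:ℝ) 1)
    (hquant : ∃ K : Finset (Fin I), K.card = k ∧ ∀ i ∈ K, ENNReal.ofReal (Γstar i) ≤ Γ0)
    (Z : Fin I → Ω → ℝ)
    (hZ01 : ∀ i ω, Z i ω = 0 ∨ Z i ω = 1)
    (hZmeas : ∀ i, Measurable (Z i))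
    (hZind : iIndepFun Z μ)
    (hZp : ∀ i, μ {ω | Z i ω = 1}
      = ENNReal.ofReal (Real.exp (Real.log (Γstar i) * u i 0) /
          (Real.exp (Real.log (Γstar i) * u i 0) + Real.exp (Real.log (Γstar i) * u i 1))))
    (S : Finset (Fin I)) (hScard : S.card = k)
    (hSsmall : ∀ i ∈ S, ∀ j ∉ S, |q i 0 - q i 1| ≤ |q j 0 - q j 1|)
    (ξ : Fin I → Ω' → Bool)
    (hξmeas : ∀ i, Measurable (ξ i))
    (hξind : iIndepFun ξ μ')
    (hξp : ∀ i ∈ S, μ' {ω | ξ i ω = true} = 1 - (1 + Γ0)⁻¹) :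
    ∀ α ∈ Set.Ioo (0:ℝ) 1,
      μ {ω | (μ' {ω' | (∑ i, (Z i ω * q i 0 + (1 - Z i ω) * q i 1))
          ≤ (∑ i ∈ S, (if ξ i ω' then max (q i 0) (q i 1) else min (q i 0) (q i 1)))
              + ∑ i ∈ Sᶜ, max (q i 0) (q i 1)}).toReal ≤ α}
        ≤ ENNReal.ofReal α := by
  intro α hα
  obtain ⟨K, hKcard, hKΓ⟩ := hquant
  have hdec : Measurable fun x : ℝ => decide (x = 1) := measurable_to_bool <| by
    simp [Set.preimage]
  set f : Fin I → Ω → Bool := fun i ω => decide (Z i ω = 1)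
  set v : Fin I → Bool → ℝ := fun i b => if b then q i 0 else q i 1
  have hT (ω : Ω) : ∑ i, (Z i ω * q i 0 + (1 - Z i ω) * q i 1) = ∑ i, v i (f i ω) :=
    sum_congr rfl fun i _ => by rcases hZ01 i ω with h | h <;> simp [v, f, h]
  have hdom (t : ℝ) : μ {ω | t ≤ ∑ i, v i (f i ω)} ≤
      μ' {ω' | t ≤ ∑ i, worstCaseValue S v i (ξ i ω')} := by
    refine measure_le_sum_le_measure_worstCase (f := f) (fun i => hdec.comp (hZmeas i))
      (hZind.comp _ fun _ => hdec) hξmeas hξind (hKcard.trans hScard.symm) hSsmall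
      (fun i hi => ?_) (fun i hi => (hξp i hi).ge) t
    have hset : {ω | f i ω = true} = {ω | Z i ω = 1} := by ext; simp [f]
    rw [hset, hZp i]
    exact ofReal_exp_div_mem_Icc (hΓstar i) (hKΓ i hi) (hu i 0) (hu i 1)
  have hfin : (Set.range fun ω => ∑ i, v i (f i ω)).Finite :=
    (Set.finite_range fun b : Fin I → Bool => ∑ i, v i (b i)).subset
      (Set.range_comp_subset_range (fun ω i => f i ω) fun b => ∑ i, v i (b i))
  have hTbar (ω' : Ω') : (∑ i ∈ S, if ξ i ω' then max (q i 0) (q i 1) else min (q i 0) (q i 1))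
      + ∑ i ∈ Sᶜ, max (q i 0) (q i 1) = ∑ i, worstCaseValue S v i (ξ i ω') :=
    (sum_worstCaseValue S v _).symm
  simp only [hT, hTbar]
  calc _ = μ {ω | μ' {ω' | ∑ i, v i (f i ω) ≤ ∑ i, worstCaseValue S v i (ξ i ω')} ≤
        ENNReal.ofReal α} := by
        simp only [ENNReal.le_ofReal_iff_toReal_le (measure_ne_top _ _) hα.1.le]
    _ ≤ ENNReal.ofReal α := measure_pvalue_le hfin hdom _

/-- Validity of the sensitivity-analysis p-value for quantiles of hidden biases
in matched pairs: under Fisher's sharp null and `Γ*_{(k)} ≤ Γ0`, the p-value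
`p̄_{Γ0;k} = Ḡ_{Γ0;k}(T)` satisfies `P(p̄_{Γ0;k} ≤ α) ≤ α`. -/
theorem stmt10
    {Ω Ω' : Type*} [MeasurableSpace Ω] [MeasurableSpace Ω']
    (μ : Measure Ω) (μ' : Measure Ω')
    [IsProbabilityMeasure μ] [IsProbabilityMeasure μ']
    (I : ℕ) (q : Fin I → Fin 2 → ℝ)
    (k : ℕ) (hk1 : 1 ≤ k) (hkI : k ≤ I)
    (Γ0 : ℝ≥0∞) (hΓ0 : 1 ≤ Γ0)
    (Γstar : Fin I → ℝ) (hΓstar : ∀ i, 1 ≤ Γstar i)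
    (u : Fin I → Fin 2 → ℝ) (hu : ∀ i j, u i j ∈ Set.Icc (0:ℝ) 1)
    (hquant : ∃ K : Finset (Fin I), K.card = k ∧ ∀ i ∈ K, ENNReal.ofReal (Γstar i) ≤ Γ0)
    (Z : Fin I → Ω → ℝ)
    (hZ01 : ∀ i ω, Z i ω = 0 ∨ Z i ω = 1)
    (hZmeas : ∀ i, Measurable (Z i))
    (hZind : iIndepFun Z μ)
    (hZp : ∀ i, μ {ω | Z i ω = 1}
      = ENNReal.ofReal (Real.exp (Real.log (Γstar i) * u i 0) /
          (Real.exp (Real.log (Γstar i) * u i 0) + Real.exp (Real.log (Γstar i) * u i 1))))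
    (S : Finset (Fin I)) (hScard : S.card = k)
    (hSsmall : ∀ i ∈ S, ∀ j ∉ S, |q i 0 - q i 1| ≤ |q j 0 - q j 1|)
    (ξ : Fin I → Ω' → Bool)
    (hξmeas : ∀ i, Measurable (ξ i))
    (hξind : iIndepFun ξ μ')
    (hξp : ∀ i ∈ S, μ' {ω | ξ i ω = true} = 1 - (1 + Γ0)⁻¹) :
    ∀ α ∈ Set.Ioo (0:ℝ) 1,
      μ {ω | (μ' {ω' | (∑ i, (Z i ω * q i 0 + (1 - Z i ω) * q i 1))
          ≤ (∑ i ∈ S, (if ξ i ω' then max (q i 0) (q i 1) else min (q i 0) (q i 1)))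
              + ∑ i ∈ Sᶜ, max (q i 0) (q i 1)}).toReal ≤ α}
        ≤ ENNReal.ofReal α :=
  stmt10_general μ μ' I q k Γ0 Γstar hΓstar u hu hquant Z hZ01 hZmeas hZind hZp S hScard hSsmall ξ
    hξmeas hξind hξp
end

section
/- Let (p̄_{Γ_0;k})_{Γ_0 ≥ 1, 1 ≤ k ≤ I} be a family of valid p-values with the property: whenever the true hidden bias vector Γ* satisfies Γ*_{(k)} ≤ Γ_0, we have p̄_{Γ_0;k} ≥ G(T) where G is the true survival function of T evaluated at T. Define, for each Γ_0 and k, the set S_{Γ_0;k} = {Γ ∈ [1,∞]^I : Γ_{(k)} ≤ Γ_0}. Then the simultaneous confidence set ∩_{(Γ_0,k): p̄_{Γ_0;k} ≤ α} (S_{Γ_0;k})^c covers the true bias vector Γ* with probability at least 1 - α, for any α ∈ (0,1), with no multiplicity correction. -/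
/-!
Write `S t = μ {T ≥ t}` for the survival function of `T`. The event `S (T) ≤ a` is the preimage
under `T` of `A = {t | S t ≤ a}`. By inner regularity the law of `T` gives `A` the supremum of the
masses of its compact subsets, and a nonempty compact `K ⊆ A` has a least element `k ∈ A`, so
`K ⊆ [k, ∞)` has mass at most `S k ≤ a`. Hence `P(S(T) ≤ a) ≤ a`. Whenever `Γ*` lies in some
`S_{Γ0;k}` with `p̄_{Γ0;k} ≤ α`, validity of that p-value gives `S(T) ≤ p̄_{Γ0;k} ≤ α`, so the
confidence set fails to cover `Γ*` only on this one event of probability at most `α`, whatever the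
number of pairs `(Γ0, k)`.
-/

open scoped ENNReal
open MeasureTheory Set

theorem measure_setOf_measure_Ici_le_le {α : Type*} [TopologicalSpace α] [MeasurableSpace α]
    [BorelSpace α] [LinearOrder α] [OrderClosedTopology α] (ν : Measure α) [ν.InnerRegular]
    (a : ℝ≥0∞) : ν {t | ν (Ici t) ≤ a} ≤ a := by
  have hanti : Antitone fun t => ν (Ici t) := fun s t hst => measure_mono (Ici_subset_Ici.2 hst)
  have hA : MeasurableSet {t | ν (Ici t) ≤ a} := hanti.measurable measurableSet_Iic
  rw [hA.measure_eq_iSup_isCompact]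
  refine iSup₂_le fun K hKA => iSup_le fun hK => ?_
  rcases K.eq_empty_or_nonempty with rfl | hne
  · simp
  obtain ⟨k, hkK, hk⟩ := hK.exists_isLeast hne
  exact (measure_mono fun _ hx => hk hx).trans (hKA hkK)

theorem measure_setOf_survival_le_le {Ω : Type*} [MeasurableSpace Ω] (μ : Measure Ω)
    [IsFiniteMeasure μ] {T : Ω → ℝ} (hT : Measurable T) (a : ℝ≥0∞) :
    μ {ω | μ {ω' | T ω ≤ T ω'} ≤ a} ≤ a := by
  have hsurv (t : ℝ) : μ.map T (Ici t) = μ {ω' | t ≤ T ω'} :=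
    Measure.map_apply hT measurableSet_Ici
  calc μ {ω | μ {ω' | T ω ≤ T ω'} ≤ a} = μ (T ⁻¹' {t | μ.map T (Ici t) ≤ a}) := by
        simp only [hsurv, preimage_ofPred_eq]
    _ ≤ μ.map T {t | μ.map T (Ici t) ≤ a} := Measure.le_map_apply hT.aemeasurable _
    _ ≤ a := measure_setOf_measure_Ici_le_le _ a

/-- Simultaneous validity of the confidence sets obtained by inverting a family
of valid sensitivity-analysis p-values: the intersection over all `(Γ0, k)`
with `p̄_{Γ0;k} ≤ α` of the complements of `S_{Γ0;k}` covers the true hidden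
bias vector with probability at least `1 - α`, with no multiplicity
correction. -/
theorem stmt11
    {Ω : Type*} [MeasurableSpace Ω] (μ : Measure Ω) [IsProbabilityMeasure μ]
    (I : ℕ) (Γstar : Fin I → ℝ≥0∞)
    (T : Ω → ℝ) (hT : Measurable T)
    (p : ℝ≥0∞ → ℕ → Ω → ℝ)
    -- validity: whenever the true biases satisfy Γ*_{(k)} ≤ Γ0, the p-value
    -- dominates the true survival function of T evaluated at T
    (hvalid : ∀ (Γ0 : ℝ≥0∞) (k : ℕ), 1 ≤ Γ0 → 1 ≤ k → k ≤ I →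
      (∃ K : Finset (Fin I), K.card = k ∧ ∀ i ∈ K, Γstar i ≤ Γ0) →
      ∀ ω, (μ {ω' | T ω ≤ T ω'}).toReal ≤ p Γ0 k ω) :
    ∀ α ∈ Set.Ioo (0:ℝ) 1,
      ENNReal.ofReal (1 - α) ≤
        μ {ω | ∀ (Γ0 : ℝ≥0∞) (k : ℕ), 1 ≤ Γ0 → 1 ≤ k → k ≤ I →
          p Γ0 k ω ≤ α →
          ¬ (∃ K : Finset (Fin I), K.card = k ∧ ∀ i ∈ K, Γstar i ≤ Γ0)} := by
  intro α hα
  set B := {ω | μ {ω' | T ω ≤ T ω'} ≤ ENNReal.ofReal α}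
  have hcover : Bᶜ ⊆ {ω | ∀ (Γ0 : ℝ≥0∞) (k : ℕ), 1 ≤ Γ0 → 1 ≤ k → k ≤ I →
      p Γ0 k ω ≤ α → ¬ (∃ K : Finset (Fin I), K.card = k ∧ ∀ i ∈ K, Γstar i ≤ Γ0)} := by
    intro ω hω Γ0 k hΓ0 hk hkI hpα hK
    exact hω (ENNReal.le_ofReal_iff_toReal_le (measure_ne_top μ _) hα.1.le |>.2
      ((hvalid Γ0 k hΓ0 hk hkI hK ω).trans hpα))
  calc ENNReal.ofReal (1 - α) = 1 - ENNReal.ofReal α := by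
        rw [ENNReal.ofReal_sub 1 hα.1.le, ENNReal.ofReal_one]
    _ ≤ 1 - μ B := tsub_le_tsub_left (measure_setOf_survival_le_le μ hT _) 1
    _ ≤ μ Bᶜ := tsub_le_iff_left.2 (measure_univ (μ := μ) ▸ measure_univ_le_add_compl B)
    _ ≤ _ := measure_mono hcover
end

section
/- Consider a matched set with one treated unit among n units, with treatment probabilities e_{(j)} = P(Z_{(j)} = 1) for the units sorted by their scores q_{(1)} ≤ ... ≤ q_{(n)}, Σ_j e_{(j)} = 1. Let T_s = Σ_j Z_{(j)} q_{(j)} with mean μ = Σ_j e_{(j)} q_{(j)} and variance v² = Σ_j e_{(j)}(q_{(j)} - μ)², and let R = q_{(n)} - q_{(1)}. Then μ - q_{(1)} ≥ e_{(n)} R and q_{(n)} - μ ≥ e_{(1)} R, and consequently v² ≥ e_{(1)} e_{(n)} (e_{(1)} + e_{(n)}) R². -/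
/-!
Writing `m` for the weighted mean, `m - q₁ = ∑ eⱼ (qⱼ - q₁)` is a sum of nonnegative terms, one of
which is `eₙ R`; symmetrically `qₙ - m ≥ e₁ R`. The variance is at least its two extreme terms
`e₁ (q₁ - m)² + eₙ (qₙ - m)²`, and the two mean bounds turn these into `e₁ (eₙ R)² + eₙ (e₁ R)²`.
-/

open Finset

section WeightedMean

variable {ι : Type*} [Fintype ι] {e q : ι → ℝ}

lemma sum_mul_sub_const_of_sum_eq_one (hesum : ∑ j, e j = 1) (a : ℝ) :
    ∑ j, e j * (q j - a) = ∑ j, e j * q j - a := by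
  simp only [mul_sub, sum_sub_distrib, ← sum_mul, hesum, one_mul]

lemma mul_sub_le_sum_mul_sub (he0 : ∀ j, 0 ≤ e j) (hesum : ∑ j, e j = 1) {a : ℝ}
    (ha : ∀ j, a ≤ q j) (k : ι) : e k * (q k - a) ≤ ∑ j, e j * q j - a := by
  rw [← sum_mul_sub_const_of_sum_eq_one hesum]
  exact single_le_sum (f := fun j => e j * (q j - a))
    (fun j _ => mul_nonneg (he0 j) (sub_nonneg.mpr (ha j))) (mem_univ k)

lemma mul_sub_le_sub_sum_mul (he0 : ∀ j, 0 ≤ e j) (hesum : ∑ j, e j = 1) {b : ℝ}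
    (hb : ∀ j, q j ≤ b) (k : ι) : e k * (b - q k) ≤ b - ∑ j, e j * q j := by
  have h := mul_sub_le_sum_mul_sub (q := fun j => -q j) he0 hesum (a := -b)
    (fun j => neg_le_neg (hb j)) k
  simp only [mul_neg, sum_neg_distrib] at h
  linarith

lemma mul_mul_add_mul_sq_le_sum_mul_sq (he0 : ∀ j, 0 ≤ e j) (hesum : ∑ j, e j = 1) {i k : ι}
    (hi : ∀ j, q i ≤ q j) (hk : ∀ j, q j ≤ q k) :
    e i * e k * (e i + e k) * (q k - q i) ^ 2 ≤
      ∑ j, e j * (q j - ∑ l, e l * q l) ^ 2 := by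
  set m := ∑ l, e l * q l
  have hterm_nonneg : ∀ j ∈ univ, 0 ≤ e j * (q j - m) ^ 2 :=
    fun j _ => mul_nonneg (he0 j) (sq_nonneg _)
  obtain rfl | hik := eq_or_ne i k
  · simpa using sum_nonneg hterm_nonneg
  have hR : 0 ≤ q k - q i := sub_nonneg.mpr (hi k)
  have hlow : (e k * (q k - q i)) ^ 2 ≤ (q i - m) ^ 2 := by
    rw [← neg_sub m, neg_sq]
    exact pow_le_pow_left₀ (mul_nonneg (he0 k) hR) (mul_sub_le_sum_mul_sub he0 hesum hi k) 2
  have hhigh : (e i * (q k - q i)) ^ 2 ≤ (q k - m) ^ 2 :=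
    pow_le_pow_left₀ (mul_nonneg (he0 i) hR) (mul_sub_le_sub_sum_mul he0 hesum hk i) 2
  calc e i * e k * (e i + e k) * (q k - q i) ^ 2
      = e i * (e k * (q k - q i)) ^ 2 + e k * (e i * (q k - q i)) ^ 2 := by ring
    _ ≤ e i * (q i - m) ^ 2 + e k * (q k - m) ^ 2 := by gcongr <;> exact he0 _
    _ ≤ ∑ j, e j * (q j - m) ^ 2 :=
      add_le_sum hterm_nonneg (mem_univ i) (mem_univ k) hik

end WeightedMean

/-- Lower bounds on the mean deviations and the variance of a one-hot weighted
statistic in terms of the extreme assignment probabilities and the range. -/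
theorem stmt12
    (n : ℕ) (hn : 0 < n) (e q : Fin n → ℝ)
    (he0 : ∀ j, 0 ≤ e j) (hesum : ∑ j, e j = 1) (hq : Monotone q) :
    let first : Fin n := ⟨0, hn⟩
    let last : Fin n := ⟨n - 1, Nat.sub_lt hn Nat.one_pos⟩
    let m : ℝ := ∑ j, e j * q j
    let v2 : ℝ := ∑ j, e j * (q j - m) ^ 2
    let R : ℝ := q last - q first
    e last * R ≤ m - q first ∧
      e first * R ≤ q last - m ∧
      e first * e last * (e first + e last) * R ^ 2 ≤ v2 := by
  intro first last m v2 R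
  have hfirst : ∀ j, q first ≤ q j := fun j => hq (Fin.mk_le_mk.mpr (Nat.zero_le _))
  have hlast : ∀ j, q j ≤ q last := fun j => hq (Fin.mk_le_mk.mpr (Nat.le_sub_one_of_lt j.isLt))
  exact ⟨mul_sub_le_sum_mul_sub he0 hesum hfirst last,
    mul_sub_le_sub_sum_mul he0 hesum hlast first,
    mul_mul_add_mul_sq_le_sum_mul_sq he0 hesum hfirst hlast⟩
end

section
/- Let μ_i, v_i² be the true means and variances of independent statistics T_i (i=1,...,I), and let μ_i(Γ_i), v_i²(Γ_i) be their maximized counterparts under the constraint that the hidden bias of set i is at most Γ_i, satisfying μ_i ≤ μ_i(Γ_i) for all i. Let A = {i : v_i² > v_i²(Γ_i)}, and set Δ_μ = |A|^{-1} Σ_{i∈A} (μ_i(Γ_i) - μ_i) > 0 and Δ_{v²} = |A|^{-1} Σ_{i∈A} (v_i² - v_i²(Γ_i)) > 0 (when A is nonempty). Write μ(Γ) = Σ_i μ_i(Γ_i), σ²(Γ) = Σ_i v_i²(Γ_i), μ = Σ_i μ_i, σ² = Σ_i v_i². Then for any c ≥ 0: μ(Γ) + c·σ(Γ) − (μ +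 c·σ) ≥ (|A|·Δ_{v²}/σ) · (Δ_μ·σ/Δ_{v²} − c). In particular, if Δ_μ·σ/Δ_{v²} ≥ c, then μ(Γ) + c·σ(Γ) ≥ μ + c·σ. -/
/-!
Averaging over `A` only rescales: `|A| Δ_μ` and `|A| Δ_{v²}` are the total mean gain and variance
loss on `A`, so the left-hand side equals `|A| Δ_μ - c |A| Δ_{v²} / σ`. The mean gain on `A` is at
most the total gain `μ(Γ) - μ`, and since `σ² - σ²(Γ)` is at most the variance loss on `A`,
`σ - σ(Γ) ≤ (σ² - σ²(Γ)) / σ ≤ |A| Δ_{v²} / σ`.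
-/

theorem Finset.sum_le_sum_filter_of_nonpos {ι M : Type*} [AddCommMonoid M] [PartialOrder M]
    [IsOrderedAddMonoid M] {s : Finset ι} {f : ι → M} (p : ι → Prop) [DecidablePred p]
    (h : ∀ i ∈ s, ¬ p i → f i ≤ 0) : ∑ i ∈ s, f i ≤ ∑ i ∈ s.filter p, f i := by
  rw [← Finset.sum_filter_add_sum_filter_not s p]
  refine add_le_of_nonpos_right (Finset.sum_nonpos fun i hi => ?_)
  obtain ⟨his, hpi⟩ := Finset.mem_filter.mp hi
  exact h i his hpi

theorem Real.sqrt_sub_sqrt_le_div {a b k : ℝ} (ha : 0 < a) (hk : 0 ≤ k) (hab : a - b ≤ k) :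
    √a - √b ≤ k / √a := by
  have hsa : 0 < √a := Real.sqrt_pos.mpr ha
  rw [le_div_iff₀ hsa, sub_mul, Real.mul_self_sqrt ha.le]
  rcases le_total a b with hle | hle
  · have hab' : √a * √a ≤ √b * √a :=
      mul_le_mul_of_nonneg_right (Real.sqrt_le_sqrt hle) hsa.le
    rw [Real.mul_self_sqrt ha.le] at hab'
    linarith
  · have hba : √b * √b ≤ √b * √a :=
      mul_le_mul_of_nonneg_left (Real.sqrt_le_sqrt hle) (Real.sqrt_nonneg b)
    have hb : b ≤ √b * √b := by
      rw [← sq, Real.sq_sqrt']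
      exact le_max_left b 0
    linarith

theorem stmt15_general
    (I : ℕ) (m mG v vG : Fin I → ℝ) (c : ℝ) (hc : 0 ≤ c)
    (hm : ∀ i, m i ≤ mG i)
    (hσpos : 0 < ∑ i, v i)
    (hA : (Finset.univ.filter (fun i => vG i < v i)).Nonempty) :
    let A := Finset.univ.filter (fun i => vG i < v i)
    let Δμ : ℝ := (A.card : ℝ)⁻¹ * ∑ i ∈ A, (mG i - m i)
    let Δv : ℝ := (A.card : ℝ)⁻¹ * ∑ i ∈ A, (v i - vG i)
    let σ : ℝ := Real.sqrt (∑ i, v i)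
    let σG : ℝ := Real.sqrt (∑ i, vG i)
    ((A.card : ℝ) * Δv / σ * (Δμ * σ / Δv - c)
        ≤ (∑ i, mG i) + c * σG - ((∑ i, m i) + c * σ)) ∧
      (c ≤ Δμ * σ / Δv → (∑ i, m i) + c * σ ≤ (∑ i, mG i) + c * σG) := by
  intro A Δμ Δv σ σG
  have hcard : (A.card : ℝ) ≠ 0 := Nat.cast_ne_zero.mpr (Finset.card_pos.mpr hA).ne'
  have hσ : 0 < σ := Real.sqrt_pos.mpr hσpos
  have hloss : 0 < ∑ i ∈ A, (v i - vG i) :=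
    Finset.sum_pos (fun i hi => sub_pos.mpr (Finset.mem_filter.mp hi).2) hA
  have hΔv : Δv ≠ 0 := mul_ne_zero (inv_ne_zero hcard) hloss.ne'
  have hgain : (A.card : ℝ) * Δμ ≤ (∑ i, mG i) - ∑ i, m i := by
    rw [mul_inv_cancel_left₀ hcard, ← Finset.sum_sub_distrib]
    exact Finset.sum_le_sum_of_subset_of_nonneg (Finset.filter_subset _ _)
      fun i _ _ => sub_nonneg.mpr (hm i)
  have hsd : σ - σG ≤ (A.card : ℝ) * Δv / σ := by
    rw [mul_inv_cancel_left₀ hcard]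
    refine Real.sqrt_sub_sqrt_le_div hσpos hloss.le ?_
    rw [← Finset.sum_sub_distrib]
    exact Finset.sum_le_sum_filter_of_nonpos _ fun i _ hi => sub_nonpos.mpr (not_lt.mp hi)
  have hlhs : (A.card : ℝ) * Δv / σ * (Δμ * σ / Δv - c)
      = (A.card : ℝ) * Δμ - c * ((A.card : ℝ) * Δv / σ) := by
    field_simp
  have hbound : (A.card : ℝ) * Δv / σ * (Δμ * σ / Δv - c)
      ≤ (∑ i, mG i) + c * σG - ((∑ i, m i) + c * σ) := by
    rw [hlhs]
    linarith [mul_le_mul_of_nonneg_left hsd hc]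
  refine ⟨hbound, fun hcle => ?_⟩
  have hscale : 0 ≤ (A.card : ℝ) * Δv / σ := by
    rw [mul_inv_cancel_left₀ hcard]
    exact div_nonneg hloss.le hσ.le
  linarith [mul_nonneg hscale (sub_nonneg.mpr hcle)]

/-- Key deterministic inequality: the worst-case Gaussian quantile
`μ(Γ) + c σ(Γ)` dominates the true one `μ + c σ` once the mean gain dominates
the variance loss. Here `v i` and `vG i` denote the true and maximized
variances `v_i²` and `v_i²(Γ_i)`. -/
theorem stmt15
    (I : ℕ) (m mG v vG : Fin I → ℝ) (c : ℝ) (hc : 0 ≤ c)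
    (hm : ∀ i, m i ≤ mG i)
    (hv0 : ∀ i, 0 ≤ v i) (hvG0 : ∀ i, 0 ≤ vG i)
    (hσpos : 0 < ∑ i, v i)
    (hA : (Finset.univ.filter (fun i => vG i < v i)).Nonempty) :
    let A := Finset.univ.filter (fun i => vG i < v i)
    let Δμ : ℝ := (A.card : ℝ)⁻¹ * ∑ i ∈ A, (mG i - m i)
    let Δv : ℝ := (A.card : ℝ)⁻¹ * ∑ i ∈ A, (v i - vG i)
    let σ : ℝ := Real.sqrt (∑ i, v i)
    let σG : ℝ := Real.sqrt (∑ i, vG i)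
    ((A.card : ℝ) * Δv / σ * (Δμ * σ / Δv - c)
        ≤ (∑ i, mG i) + c * σG - ((∑ i, m i) + c * σ)) ∧
      (c ≤ Δμ * σ / Δv → (∑ i, m i) + c * σ ≤ (∑ i, mG i) + c * σG) :=
  stmt15_general I m mG v vG c hc hm hσpos hA
end

section
/- Let t(z, y) be an effect increasing test statistic: t(z, y + z∘η + (1−z)∘ξ) ≥ t(z, y) for all z ∈ Z, y ∈ ℝ^N and η ⪰ 0 ⪰ ξ. Assume every unit's treatment potential outcome is at most its control potential outcome, Y(1) ⪯ Y(0) (the bounded null), and let Y = Z∘Y(1) + (1−Z)∘Y(0) be the observed outcome vector. Then for every assignment a ∈ Z: t(a, Y) ≥ t(a, Y(a)), where Y(a) = a∘Y(1) + (1−a)∘Y(0). -/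
theorem mix_eq_mix_add_corrections {ι R : Type*} [CommRing R] (a z y₁ y₀ : ι → R) :
    (fun i => z i * y₁ i + (1 - z i) * y₀ i) =
      fun i => (a i * y₁ i + (1 - a i) * y₀ i) + a i * ((1 - z i) * (y₀ i - y₁ i))
        + (1 - a i) * (z i * (y₁ i - y₀ i)) := by
  funext i
  ring

/-- For an effect increasing statistic, under the bounded null `Y(1) ⪯ Y(0)`,
the statistic computed on the observed outcomes `Y` dominates the statistic
computed on the outcomes `Y(a)` that would be observed under assignment `a`. -/
theorem stmt18
    (N : ℕ) (𝒵 : Set (Fin N → ℝ))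
    (h𝒵 : ∀ z ∈ 𝒵, ∀ i, z i = 0 ∨ z i = 1)
    (t : (Fin N → ℝ) → (Fin N → ℝ) → ℝ)
    (hEI : ∀ z ∈ 𝒵, ∀ y η ξ : Fin N → ℝ,
      (∀ i, 0 ≤ η i) → (∀ i, ξ i ≤ 0) →
      t z y ≤ t z (fun i => y i + z i * η i + (1 - z i) * ξ i))
    (Y1 Y0 : Fin N → ℝ) (hnull : ∀ i, Y1 i ≤ Y0 i)
    (Z : Fin N → ℝ) (hZ : Z ∈ 𝒵) :
    ∀ a ∈ 𝒵,
      t a (fun i => a i * Y1 i + (1 - a i) * Y0 i)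
        ≤ t a (fun i => Z i * Y1 i + (1 - Z i) * Y0 i) := by
  intro a ha
  have hZ_mem_Icc (i : Fin N) : 0 ≤ Z i ∧ Z i ≤ 1 := by
    rcases h𝒵 Z hZ i with h | h <;> norm_num [h]
  rw [mix_eq_mix_add_corrections a Z]
  exact hEI a ha _ _ _
    (fun i => mul_nonneg (sub_nonneg.2 (hZ_mem_Icc i).2) (sub_nonneg.2 (hnull i)))
    (fun i => mul_nonpos_of_nonneg_of_nonpos (hZ_mem_Icc i).1 (sub_nonpos.2 (hnull i)))
end

section
/- Let t(z, y) be a differential increasing test statistic: t(z, y + a∘η) − t(z, y) ≤ t(a, y + a∘η) − t(a, y) for all z, a ∈ Z, y ∈ ℝ^N and η ⪰ 0. Assume the bounded null Y(1) ⪯ Y(0) holds and let Y = Z∘Y(1) + (1−Z)∘Y(0) be the observed outcome vector under the realized assignment Z. Then for every a ∈ Z: t(a, Y) − t(Z, Y) ≥ t(a, Y(0)) − t(Z, Y(0)). Consequently, 1{t(a, Y) ≥ t(Z, Y)} ≥ 1{t(a, Y(0)) ≥ t(Z, Y(0))} for every a, so any assignment-randomization tail probability of t(·, Y) evaluated at t(Z,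 Y) is at least the corresponding tail probability of t(·, Y(0)) evaluated at t(Z, Y(0)). -/
/-!
Under the bounded null the treatment effect `η = Y(0) - Y(1)` is nonnegative and the observed
outcomes satisfy `Y(0) = Y + Z ∘ η`. Differential increasingness with this `η` and the realized
assignment `Z` in the role of `a` says that moving from `Y` to `Y(0)` raises `t(Z, ·)` at least
as much as `t(a, ·)`, which is the comparison of differentials; the indicator and tail-probability
comparisons follow pointwise.
-/

def IsDifferentialIncreasing {ι : Type*} (𝒵 : Set (ι → ℝ)) (t : (ι → ℝ) → (ι → ℝ) → ℝ) :
    Prop :=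
  ∀ z ∈ 𝒵, ∀ a ∈ 𝒵, ∀ y η : ι → ℝ, 0 ≤ η → t z (y + a * η) - t z y ≤ t a (y + a * η) - t a y

theorem IsDifferentialIncreasing.sub_le_sub_of_add_mul {ι : Type*} {𝒵 : Set (ι → ℝ)}
    {t : (ι → ℝ) → (ι → ℝ) → ℝ} (ht : IsDifferentialIncreasing 𝒵 t) {a Z : ι → ℝ}
    (ha : a ∈ 𝒵) (hZ : Z ∈ 𝒵) (y : ι → ℝ) {η : ι → ℝ} (hη : 0 ≤ η) :
    t a (y + Z * η) - t Z (y + Z * η) ≤ t a y - t Z y := by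
  linarith [ht a ha Z hZ y η hη]

theorem observed_add_mul_sub {ι R : Type*} [CommRing R] (Z Y1 Y0 : ι → R) :
    Z * Y1 + (1 - Z) * Y0 + Z * (Y0 - Y1) = Y0 := by
  ring

theorem IsDifferentialIncreasing.sub_le_sub_observed {ι : Type*} {𝒵 : Set (ι → ℝ)}
    {t : (ι → ℝ) → (ι → ℝ) → ℝ} (ht : IsDifferentialIncreasing 𝒵 t) {Y1 Y0 : ι → ℝ}
    (hnull : Y1 ≤ Y0) {a Z : ι → ℝ} (ha : a ∈ 𝒵) (hZ : Z ∈ 𝒵) :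
    t a Y0 - t Z Y0 ≤ t a (Z * Y1 + (1 - Z) * Y0) - t Z (Z * Y1 + (1 - Z) * Y0) := by
  simpa only [observed_add_mul_sub] using
    ht.sub_le_sub_of_add_mul ha hZ (Z * Y1 + (1 - Z) * Y0) (sub_nonneg.mpr hnull)

theorem Finset.sum_mul_ite_le_of_imp {ι R : Type*} [Semiring R] [PartialOrder R]
    [IsOrderedRing R] (A : Finset ι) (w : ι → R) (p q : ι → Prop) [DecidablePred p]
    [DecidablePred q] (hw : ∀ j ∈ A, 0 ≤ w j) (hpq : ∀ j ∈ A, p j → q j) :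
    ∑ j ∈ A, w j * (if p j then 1 else 0) ≤ ∑ j ∈ A, w j * (if q j then 1 else 0) := by
  refine Finset.sum_le_sum fun j hj => mul_le_mul_of_nonneg_left ?_ (hw j hj)
  split_ifs with hp hq <;> first | exact le_rfl | exact zero_le_one | exact absurd (hpq j hj hp) hq

theorem stmt19_general
    (N : ℕ) (𝒵 : Set (Fin N → ℝ))
    (t : (Fin N → ℝ) → (Fin N → ℝ) → ℝ)
    (hDI : ∀ z ∈ 𝒵, ∀ a ∈ 𝒵, ∀ y η : Fin N → ℝ, (∀ i, 0 ≤ η i) →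
      t z (fun i => y i + a i * η i) - t z y
        ≤ t a (fun i => y i + a i * η i) - t a y)
    (Y1 Y0 : Fin N → ℝ) (hnull : ∀ i, Y1 i ≤ Y0 i)
    (Z : Fin N → ℝ) (hZ : Z ∈ 𝒵) :
    let Y : Fin N → ℝ := fun i => Z i * Y1 i + (1 - Z i) * Y0 i
    (∀ a ∈ 𝒵, t a Y0 - t Z Y0 ≤ t a Y - t Z Y) ∧
      (∀ a ∈ 𝒵, t Z Y0 ≤ t a Y0 → t Z Y ≤ t a Y) ∧
      (∀ (ι : Type) (A : Finset ι) (w : ι → ℝ) (az : ι → Fin N → ℝ),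
        (∀ j ∈ A, 0 ≤ w j) → (∀ j ∈ A, az j ∈ 𝒵) →
        (∑ j ∈ A, w j * (if t Z Y0 ≤ t (az j) Y0 then (1:ℝ) else 0))
          ≤ ∑ j ∈ A, w j * (if t Z Y ≤ t (az j) Y then (1:ℝ) else 0)) := by
  intro Y
  have hdiff : ∀ a ∈ 𝒵, t a Y0 - t Z Y0 ≤ t a Y - t Z Y := fun a ha =>
    IsDifferentialIncreasing.sub_le_sub_observed hDI hnull ha hZ
  have hind : ∀ a ∈ 𝒵, t Z Y0 ≤ t a Y0 → t Z Y ≤ t a Y := fun a ha h => by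
    linarith [hdiff a ha]
  exact ⟨hdiff, hind, fun ι A w az hw haz =>
    A.sum_mul_ite_le_of_imp w _ _ hw fun j hj => hind (az j) (haz j hj)⟩

/-- For a differential increasing statistic, under the bounded null
`Y(1) ⪯ Y(0)`, the differential `t(a, Y) - t(Z, Y)` dominates
`t(a, Y(0)) - t(Z, Y(0))`; consequently the corresponding indicator
comparison holds and any assignment-randomization tail probability computed
from the observed outcomes dominates the one computed from `Y(0)`. -/
theorem stmt19
    (N : ℕ) (𝒵 : Set (Fin N → ℝ))
    (h𝒵 : ∀ z ∈ 𝒵, ∀ i, z i = 0 ∨ z i = 1)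
    (t : (Fin N → ℝ) → (Fin N → ℝ) → ℝ)
    (hDI : ∀ z ∈ 𝒵, ∀ a ∈ 𝒵, ∀ y η : Fin N → ℝ, (∀ i, 0 ≤ η i) →
      t z (fun i => y i + a i * η i) - t z y
        ≤ t a (fun i => y i + a i * η i) - t a y)
    (Y1 Y0 : Fin N → ℝ) (hnull : ∀ i, Y1 i ≤ Y0 i)
    (Z : Fin N → ℝ) (hZ : Z ∈ 𝒵) :
    let Y : Fin N → ℝ := fun i => Z i * Y1 i + (1 - Z i) * Y0 i
    (∀ a ∈ 𝒵, t a Y0 - t Z Y0 ≤ t a Y - t Z Y) ∧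
      (∀ a ∈ 𝒵, t Z Y0 ≤ t a Y0 → t Z Y ≤ t a Y) ∧
      (∀ (ι : Type) (A : Finset ι) (w : ι → ℝ) (az : ι → Fin N → ℝ),
        (∀ j ∈ A, 0 ≤ w j) → (∀ j ∈ A, az j ∈ 𝒵) →
        (∑ j ∈ A, w j * (if t Z Y0 ≤ t (az j) Y0 then (1:ℝ) else 0))
          ≤ ∑ j ∈ A, w j * (if t Z Y ≤ t (az j) Y then (1:ℝ) else 0)) :=
  stmt19_general N 𝒵 t hDI Y1 Y0 hnull Z hZ
end
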